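/- arXiv:2103.14992 — 4 statements merged into one kernel-verified Lean document; each statement's English description precedes it below -/
import Mathlib

section
/- For every finite simple graph G with m ≥ 1 edges and every nonempty proper subset S of its vertex set V, the number of edges leaving S satisfies e_out(S) ≥ vol(S)·(1 − vol(S)/(2m)) − m·Q(G), where Q(G) is the maximum modularity over all partitions of V. -/
/-! The two-block partition `{S, Sᶜ}` already has modularity
`m·Q({S, Sᶜ}) = vol(S)(1 − vol(S)/(2m)) − e_out(S)`: a block `T` contributes
`vol(T) − e_out(T) − vol(T)²/(2m)` to the modularity sum, and `vol(Sᶜ) = 2m − vol(S)`,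
`e_out(Sᶜ) = e_out(S)`. The bound follows from `Q({S, Sᶜ}) ≤ Q(G)`. -/

open Finset
open scoped Classical

noncomputable section

namespace HCSPaper

variable {V : Type*} [Fintype V] [DecidableEq V]

/-- The number of edges of a finite simple graph `G`. -/
def edgeCount (G : SimpleGraph V) : ℕ := G.edgeSet.ncard

/-- The degree `d(v)` of a vertex. -/
def deg (G : SimpleGraph V) (v : V) : ℕ := (G.neighborSet v).ncard

/-- The modularity `Q(P)` of a partition `P` of the vertex set of `G`:
`Q(P) = (1/(2m)) Σ_{u,v} [A_{u,v} − d(u)d(v)/(2m)] δ_P(u,v)`, the sum over ordered pairs. -/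
def Qmod (G : SimpleGraph V) (P : Finpartition (Finset.univ : Finset V)) : ℝ :=
  (1 / (2 * (edgeCount G : ℝ))) *
    ∑ u : V, ∑ v : V,
      ((if G.Adj u v then (1 : ℝ) else 0) -
          (deg G u : ℝ) * (deg G v : ℝ) / (2 * (edgeCount G : ℝ))) *
        (if ∃ t ∈ P.parts, u ∈ t ∧ v ∈ t then (1 : ℝ) else 0)

/-- The volume of a set of vertices: `vol(S) = Σ_{v∈S} d(v)`. -/
def vol (G : SimpleGraph V) (S : Finset V) : ℕ := ∑ v ∈ S, deg G v

/-- The number of edges of `G` with exactly one endpoint in `S`, counted as the set of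
ordered pairs `(u,v)` with `u ∈ S`, `v ∉ S` and `u ~ v` (each such edge contributes
exactly one such ordered pair). -/
def eOut (G : SimpleGraph V) (S : Finset V) : ℕ :=
  Set.ncard {p : V × V | p.1 ∈ S ∧ p.2 ∉ S ∧ G.Adj p.1 p.2}

/-- The modularity `Q(G)` of `G`: the maximum of `Q(P)` over all partitions of the
vertex set. -/
def Qmax (G : SimpleGraph V) : ℝ :=
  sSup (Set.range fun P : Finpartition (Finset.univ : Finset V) => Qmod G P)

def modularityMatrix (G : SimpleGraph V) (u v : V) : ℝ :=
  (if G.Adj u v then (1 : ℝ) else 0) - (deg G u : ℝ) * (deg G v : ℝ) / (2 * (edgeCount G : ℝ))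

def bipartition (S : Finset V) : Finpartition (Finset.univ : Finset V) :=
  Finpartition.ofSetoid (Setoid.ker (· ∈ S))

lemma sameBlock_bipartition_iff (S : Finset V) (u v : V) :
    (∃ t ∈ (bipartition S).parts, u ∈ t ∧ v ∈ t) ↔ (u ∈ S ↔ v ∈ S) := by
  rw [← Finpartition.mem_part_iff_exists, bipartition, Finpartition.mem_part_ofSetoid_iff_rel,
    Setoid.ker_def, eq_iff_iff]
  exact Iff.comm

omit [DecidableEq V] in
lemma deg_eq_sum_adj (G : SimpleGraph V) (u : V) :
    (deg G u : ℝ) = ∑ v : V, (if G.Adj u v then (1 : ℝ) else 0) := by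
  rw [Finset.sum_boole, deg, Set.ncard_eq_toFinset_card']
  congr 2
  ext v
  simp

omit [DecidableEq V] in
lemma sum_deg (G : SimpleGraph V) : ∑ v : V, (deg G v : ℝ) = 2 * (edgeCount G : ℝ) := by
  have hdeg (v : V) : deg G v = G.degree v := by
    rw [deg, Set.ncard_eq_toFinset_card', SimpleGraph.degree]; congr 1
  have hm : edgeCount G = #G.edgeFinset := by
    rw [edgeCount, Set.ncard_eq_toFinset_card', SimpleGraph.edgeFinset]
  simp only [hdeg, hm]
  exact_mod_cast G.sum_degrees_eq_twice_card_edges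

lemma vol_compl (G : SimpleGraph V) (S : Finset V) :
    (vol G Sᶜ : ℝ) = 2 * (edgeCount G : ℝ) - (vol G S : ℝ) := by
  have h := Finset.sum_add_sum_compl S fun v => (deg G v : ℝ)
  rw [sum_deg] at h
  simp only [vol, Nat.cast_sum]
  linarith

lemma eOut_eq_sum_adj (G : SimpleGraph V) (S : Finset V) :
    (eOut G S : ℝ) = ∑ u ∈ S, ∑ v ∈ Sᶜ, (if G.Adj u v then (1 : ℝ) else 0) := by
  have hset : {p : V × V | p.1 ∈ S ∧ p.2 ∉ S ∧ G.Adj p.1 p.2} =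
      ↑((S ×ˢ Sᶜ).filter fun p => G.Adj p.1 p.2) := by
    ext p
    simp [and_assoc]
  rw [eOut, hset, Set.ncard_coe_finset, Finset.card_filter, Finset.sum_product]
  push_cast
  rfl

lemma eOut_compl (G : SimpleGraph V) (S : Finset V) : (eOut G Sᶜ : ℝ) = eOut G S := by
  rw [eOut_eq_sum_adj, eOut_eq_sum_adj, compl_compl, Finset.sum_comm]
  simp only [SimpleGraph.adj_comm]

lemma sum_sum_adj_self (G : SimpleGraph V) (S : Finset V) :
    ∑ u ∈ S, ∑ v ∈ S, (if G.Adj u v then (1 : ℝ) else 0) = (vol G S : ℝ) - eOut G S := by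
  simp only [eq_sub_iff_add_eq, eOut_eq_sum_adj, ← Finset.sum_add_distrib,
    Finset.sum_add_sum_compl, vol, Nat.cast_sum, deg_eq_sum_adj]

lemma sum_sum_modularityMatrix_self (G : SimpleGraph V) (S : Finset V) :
    ∑ u ∈ S, ∑ v ∈ S, modularityMatrix G u v =
      (vol G S : ℝ) - eOut G S - (vol G S : ℝ) ^ 2 / (2 * (edgeCount G : ℝ)) := by
  simp only [modularityMatrix, Finset.sum_sub_distrib, sum_sum_adj_self, ← Finset.sum_div,
    ← Finset.sum_mul_sum, vol, Nat.cast_sum, sq]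

lemma sum_sum_mul_sameSide (f : V → V → ℝ) (S : Finset V) :
    ∑ u : V, ∑ v : V, f u v * (if (u ∈ S ↔ v ∈ S) then (1 : ℝ) else 0) =
      ∑ u ∈ S, ∑ v ∈ S, f u v + ∑ u ∈ Sᶜ, ∑ v ∈ Sᶜ, f u v := by
  rw [← Finset.sum_add_sum_compl S]
  congr 1 <;> refine Finset.sum_congr rfl fun u hu => ?_
  · simp only [hu, true_iff, mul_ite, mul_one, mul_zero, ← Finset.sum_filter,
      Finset.filter_mem_eq_inter, Finset.univ_inter]
  · simp only [Finset.mem_compl.1 hu, false_iff, mul_ite, mul_one, mul_zero, ← Finset.sum_filter,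
      Finset.filter_not, Finset.filter_mem_eq_inter, Finset.univ_inter,
      Finset.compl_eq_univ_sdiff]

lemma edgeCount_mul_Qmod_bipartition (G : SimpleGraph V) (hm : edgeCount G ≠ 0) (S : Finset V) :
    (edgeCount G : ℝ) * Qmod G (bipartition S) =
      (vol G S : ℝ) * (1 - (vol G S : ℝ) / (2 * (edgeCount G : ℝ))) - eOut G S := by
  have hm' : (edgeCount G : ℝ) ≠ 0 := by exact_mod_cast hm
  have hQmod : Qmod G (bipartition S) = 1 / (2 * (edgeCount G : ℝ)) *
      ∑ u : V, ∑ v : V, modularityMatrix G u v * (if (u ∈ S ↔ v ∈ S) then (1 : ℝ) else 0) := by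
    simp only [Qmod, modularityMatrix, sameBlock_bipartition_iff]
  rw [hQmod, sum_sum_mul_sameSide, sum_sum_modularityMatrix_self, sum_sum_modularityMatrix_self,
    eOut_compl, vol_compl]
  field_simp
  ring

lemma Qmod_le_Qmax (G : SimpleGraph V) (P : Finpartition (Finset.univ : Finset V)) :
    Qmod G P ≤ Qmax G :=
  le_csSup (Set.finite_range _).bddAbove ⟨P, rfl⟩

theorem eOut_ge_vol_sub_modularity_general (G : SimpleGraph V) (hm : 1 ≤ edgeCount G)
    (S : Finset V) :
    (vol G S : ℝ) * (1 - (vol G S : ℝ) / (2 * (edgeCount G : ℝ))) -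
        (edgeCount G : ℝ) * Qmax G ≤ (eOut G S : ℝ) := by
  have hQ : (edgeCount G : ℝ) * Qmod G (bipartition S) ≤ edgeCount G * Qmax G := by
    gcongr
    exact Qmod_le_Qmax G (bipartition S)
  rw [edgeCount_mul_Qmod_bipartition G (by omega) S] at hQ
  linarith

/-- For every finite simple graph `G` with `m ≥ 1` edges and every nonempty proper subset
`S` of its vertex set, `e_out(S) ≥ vol(S)·(1 − vol(S)/(2m)) − m·Q(G)`. -/
theorem eOut_ge_vol_sub_modularity (G : SimpleGraph V) (hm : 1 ≤ edgeCount G)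
    (S : Finset V) (hS : S.Nonempty) (hSproper : S ≠ Finset.univ) :
    (vol G S : ℝ) * (1 - (vol G S : ℝ) / (2 * (edgeCount G : ℝ))) -
        (edgeCount G : ℝ) * Qmax G ≤ (eOut G S : ℝ) :=
  eOut_ge_vol_sub_modularity_general G hm S

end HCSPaper
end
end

section
/- Let G be a finite simple graph, P a partition of its vertex set, W a subset of the vertices with |W| ≥ 2, and α > 0 such that the induced subgraph G[W] has edge expansion h(G[W]) ≥ α. Let δ = max_{C ∈ P} |W ∩ C| / |W|. Then the number of inter-community edges of P in G is at least α · min(1 − δ, 1/3) · |W|. In particular, if no part of P contains more than half of W, then the number of inter-community edges is at least (α/3)·|W|. -/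
open Finset
open scoped Classical

noncomputable section

namespace HCSPaper

variable {V : Type*} [Fintype V] [DecidableEq V]

/-- The number of edges of `G` between two disjoint sets `S` and `T`, counted as the set
of ordered pairs `(u,v)` with `u ∈ S`, `v ∈ T`, `u ~ v` (each such edge contributes
exactly one such ordered pair when `S` and `T` are disjoint). -/
def eBetween (G : SimpleGraph V) (S T : Finset V) : ℕ :=
  Set.ncard {p : V × V | p.1 ∈ S ∧ p.2 ∈ T ∧ G.Adj p.1 p.2}

/-- The number of inter-community edges of a partition `P`: the edges of `G` whose two
endpoints lie in different parts of `P`. -/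
def interEdges (G : SimpleGraph V) (P : Finpartition (Finset.univ : Finset V)) : ℕ :=
  Set.ncard {e : Sym2 V | e ∈ G.edgeSet ∧ ¬ ∃ t ∈ P.parts, ∀ v ∈ e, v ∈ t}

lemma key_le (G : SimpleGraph V) (P : Finpartition (Finset.univ : Finset V))
    (W S : Finset V) (hSW : S ⊆ W)
    (hsep : ∀ t ∈ P.parts, ∀ u ∈ S, u ∈ t → ∀ v ∈ W \ S, v ∉ t) :
    eBetween G S (W \ S) ≤ interEdges G P := by
  classical
  set A : Set (V × V) := {p : V × V | p.1 ∈ S ∧ p.2 ∈ W \ S ∧ G.Adj p.1 p.2} with hA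
  set B : Set (Sym2 V) := {e : Sym2 V | e ∈ G.edgeSet ∧ ¬ ∃ t ∈ P.parts, ∀ v ∈ e, v ∈ t} with hB
  have hinj : Set.InjOn (fun p : V × V => Sym2.mk p.1 p.2) A := by
    rintro ⟨u, v⟩ ⟨hu, hv, _⟩ ⟨u', v'⟩ ⟨hu', hv', _⟩ h
    simp only [Sym2.mk, Sym2.eq_iff] at h
    rcases h with ⟨h1, h2⟩ | ⟨h1, h2⟩
    · simp [h1, h2]
    · exfalso; subst h1; exact (Finset.mem_sdiff.mp hv').2 hu
  have himg : (fun p : V × V => Sym2.mk p.1 p.2) '' A ⊆ B := by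
    rintro e ⟨⟨u, v⟩, ⟨hu, hv, hadj⟩, rfl⟩
    refine ⟨hadj, ?_⟩
    rintro ⟨t, ht, hall⟩
    exact hsep t ht u hu (hall u (by simp [Sym2.mk])) v hv (hall v (by simp [Sym2.mk]))
  calc eBetween G S (W \ S) = A.ncard := rfl
    _ = ((fun p : V × V => Sym2.mk p.1 p.2) '' A).ncard := (Set.ncard_image_of_injOn hinj).symm
    _ ≤ B.ncard := Set.ncard_le_ncard himg (Set.toFinite B)

lemma greedy (n : ℕ) (hn : 0 < n) (F : Finset (Finset V)) (f : Finset V → ℕ)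
    (h1 : ∀ C ∈ F, 3 * f C < n) (h2 : n ≤ 3 * ∑ C ∈ F, f C) :
    ∃ I ⊆ F, n ≤ 3 * ∑ C ∈ I, f C ∧ 3 * ∑ C ∈ I, f C < 2 * n := by
  classical
  induction F using Finset.induction_on with
  | empty => simp at h2; omega
  | @insert a F ha ih =>
    by_cases h : n ≤ 3 * ∑ C ∈ F, f C
    · obtain ⟨I, hIF, hI⟩ := ih (fun C hC => h1 C (Finset.mem_insert_of_mem hC)) h
      exact ⟨I, hIF.trans (Finset.subset_insert a F), hI⟩
    · refine ⟨insert a F, subset_rfl, h2, ?_⟩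
      rw [Finset.sum_insert ha] at h2 ⊢
      have := h1 a (Finset.mem_insert_self a F)
      omega


lemma step (G : SimpleGraph V) (P : Finpartition (Finset.univ : Finset V))
    (W : Finset V) (α : ℝ)
    (hexp : ∀ S ⊆ W, S.Nonempty → (S.card : ℝ) ≤ (W.card : ℝ) / 2 →
      α * (S.card : ℝ) ≤ (eBetween G S (W \ S) : ℝ))
    (S : Finset V) (hSW : S ⊆ W) (hne : S.Nonempty) (hne' : (W \ S).Nonempty)
    (hsep : ∀ t ∈ P.parts, ∀ u ∈ S, u ∈ t → ∀ v ∈ W \ S, v ∉ t) :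
    α * min (S.card : ℝ) ((W \ S).card : ℝ) ≤ (interEdges G P : ℝ) := by
  have hcard : (W \ S).card + S.card = W.card := Finset.card_sdiff_add_card_eq_card hSW
  rcases le_total (S.card : ℝ) ((W \ S).card : ℝ) with h | h
  · rw [min_eq_left h]
    have h2 : (S.card : ℝ) ≤ (W.card : ℝ) / 2 := by
      have : (W \ S).card + S.card = W.card := hcard
      push_cast [← this]; linarith
    calc α * (S.card : ℝ) ≤ (eBetween G S (W \ S) : ℝ) := hexp S hSW hne h2
      _ ≤ (interEdges G P : ℝ) := by exact_mod_cast key_le G P W S hSW hsep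
  · rw [min_eq_right h]
    set S' := W \ S with hS'
    have hS'W : S' ⊆ W := Finset.sdiff_subset
    have hWS' : W \ S' = S := Finset.sdiff_sdiff_eq_self hSW
    have h2 : ((S').card : ℝ) ≤ (W.card : ℝ) / 2 := by
      have : (W \ S).card + S.card = W.card := hcard
      push_cast [← this]; linarith
    have hsep' : ∀ t ∈ P.parts, ∀ u ∈ S', u ∈ t → ∀ v ∈ W \ S', v ∉ t := by
      intro t ht u hu hut v hv hvt
      rw [hWS'] at hv
      exact hsep t ht v hv hvt u hu hut
    calc α * ((S').card : ℝ) ≤ (eBetween G S' (W \ S') : ℝ) := hexp S' hS'W hne' h2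
      _ ≤ (interEdges G P : ℝ) := by exact_mod_cast key_le G P W S' hS'W hsep'


lemma biUnion_facts (P : Finpartition (Finset.univ : Finset V)) (W : Finset V)
    (I : Finset (Finset V)) (hI : I ⊆ P.parts) :
    (I.biUnion fun C => W ∩ C) ⊆ W ∧
    (I.biUnion fun C => W ∩ C).card = ∑ C ∈ I, (W ∩ C).card := by
  constructor
  · exact Finset.biUnion_subset.mpr fun C _ => Finset.inter_subset_left
  · refine Finset.card_biUnion ?_
    intro x hx y hy hxy
    exact (P.disjoint (hI hx) (hI hy) hxy).mono Finset.inter_subset_right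
      Finset.inter_subset_right

lemma sep_of_biUnion (P : Finpartition (Finset.univ : Finset V)) (W : Finset V)
    (I : Finset (Finset V)) (hI : I ⊆ P.parts) :
    ∀ t ∈ P.parts, ∀ u ∈ (I.biUnion fun C => W ∩ C), u ∈ t →
      ∀ v ∈ W \ (I.biUnion fun C => W ∩ C), v ∉ t := by
  intro t ht u hu hut v hv hvt
  obtain ⟨C, hC, huC⟩ := Finset.mem_biUnion.mp hu
  have htC : t = C := P.eq_of_mem_parts ht (hI hC) hut (Finset.mem_inter.mp huC).2
  have : v ∈ I.biUnion fun C => W ∩ C :=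
    Finset.mem_biUnion.mpr ⟨C, hC, Finset.mem_inter.mpr ⟨(Finset.mem_sdiff.mp hv).1, htC ▸ hvt⟩⟩
  exact (Finset.mem_sdiff.mp hv).2 this

lemma sum_parts_inter (P : Finpartition (Finset.univ : Finset V)) (W : Finset V) :
    ∑ C ∈ P.parts, (W ∩ C).card = W.card := by
  rw [← (biUnion_facts P W P.parts subset_rfl).2]
  congr 1
  ext v
  simp only [Finset.mem_biUnion, Finset.mem_inter]
  constructor
  · rintro ⟨C, _, hv, _⟩; exact hv
  · intro hv
    obtain ⟨t, ht, hvt⟩ := P.exists_mem (Finset.mem_univ v)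
    exact ⟨t, ht, hv, hvt⟩

/-- Let `P` be a partition of the vertex set of `G`, `W` a subset of the vertices with
`|W| ≥ 2`, and `α > 0` such that the induced subgraph `G[W]` has edge expansion
`h(G[W]) ≥ α` (i.e. every `S ⊆ W` with `1 ≤ |S| ≤ |W|/2` has at least `α·|S|` edges to
`W∖S`).  Let `δ = max_{C ∈ P} |W ∩ C| / |W|`.  Then the number of inter-community edges
of `P` is at least `α · min(1 − δ, 1/3) · |W|`; in particular, if no part of `P`
contains more than half of `W`, the number of inter-community edges is at least
`(α/3)·|W|`. -/
theorem interEdges_lower_of_expander (G : SimpleGraph V)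
    (P : Finpartition (Finset.univ : Finset V))
    (W : Finset V) (hW : 2 ≤ W.card) (α : ℝ) (hα : 0 < α)
    (hexp : ∀ S ⊆ W, S.Nonempty → (S.card : ℝ) ≤ (W.card : ℝ) / 2 →
      α * (S.card : ℝ) ≤ (eBetween G S (W \ S) : ℝ))
    (δ : ℝ) (hδ : δ = ((P.parts.sup fun C => (W ∩ C).card : ℕ) : ℝ) / (W.card : ℝ)) :
    α * min (1 - δ) (1 / 3) * (W.card : ℝ) ≤ (interEdges G P : ℝ) ∧
      ((∀ C ∈ P.parts, 2 * (W ∩ C).card ≤ W.card) →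
        α / 3 * (W.card : ℝ) ≤ (interEdges G P : ℝ)) := by
  set n := W.card with hn
  have hn0 : 0 < n := by omega
  have hnR : (0 : ℝ) < (n : ℝ) := by exact_mod_cast hn0
  set m := P.parts.sup fun C => (W ∩ C).card with hm
  -- parts nonempty and sup attained
  have hPne : P.parts.Nonempty := by
    obtain ⟨v, hv⟩ := Finset.card_pos.mp (by omega : 0 < W.card)
    obtain ⟨t, ht, _⟩ := P.exists_mem (Finset.mem_univ v)
    exact ⟨t, ht⟩
  obtain ⟨C₀, hC₀, hC₀m⟩ := Finset.exists_mem_eq_sup P.parts hPne fun C => (W ∩ C).card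
  -- main inequality
  have main : α * min (1 - δ) (1 / 3) * (n : ℝ) ≤ (interEdges G P : ℝ) := by
    by_cases hcase : n ≤ 3 * m
    · -- big part case
      set S := W ∩ C₀ with hS
      have hSW : S ⊆ W := Finset.inter_subset_left
      have hScard : S.card = m := hC₀m.symm
      by_cases hmn : m = n
      · -- δ = 1, trivial
        have hδ1 : δ = 1 := by rw [hδ, hmn]; field_simp
        have : min (1 - δ) (1/3 : ℝ) = 0 := by rw [hδ1]; norm_num
        rw [this]
        simp only [mul_zero, zero_mul]
        positivity
      · have hmn' : m < n := by
          have : m ≤ n := hScard ▸ Finset.card_le_card hSW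
          omega
        have hne : S.Nonempty := Finset.card_pos.mp (by omega)
        have hne' : (W \ S).Nonempty := by
          rw [← Finset.card_pos, Finset.card_sdiff_of_subset hSW, hScard, ← hn]; omega
        have hsep : ∀ t ∈ P.parts, ∀ u ∈ S, u ∈ t → ∀ v ∈ W \ S, v ∉ t := by
          have hb : ({C₀} : Finset (Finset V)).biUnion (fun C => W ∩ C) = S := by simp [hS]
          have := sep_of_biUnion P W {C₀} (by simpa using hC₀)
          rwa [hb] at this
        have hstep := step G P W α hexp S hSW hne hne' hsep
        have hWScard : ((W \ S).card : ℝ) = (n : ℝ) - (m : ℝ) := by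
          rw [Finset.card_sdiff_of_subset hSW, hScard, ← hn]
          push_cast [Nat.cast_sub (le_of_lt hmn')]
          ring
        rw [hScard, hWScard] at hstep
        refine le_trans ?_ hstep
        have hδval : δ * (n : ℝ) = (m : ℝ) := by rw [hδ]; field_simp
        rcases le_total ((m : ℝ)) ((n : ℝ) - (m : ℝ)) with h | h
        · rw [min_eq_left h]
          have h3 : (n : ℝ) ≤ 3 * (m : ℝ) := by exact_mod_cast hcase
          calc α * min (1 - δ) (1/3 : ℝ) * (n : ℝ)
              ≤ α * (1/3 : ℝ) * (n : ℝ) :=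
                mul_le_mul_of_nonneg_right
                  (mul_le_mul_of_nonneg_left (min_le_right _ _) hα.le) hnR.le
            _ = α * ((n : ℝ)/3) := by ring
            _ ≤ α * (m : ℝ) := mul_le_mul_of_nonneg_left (by linarith) hα.le
        · rw [min_eq_right h]
          have h1δ : (1 - δ) * (n : ℝ) = (n : ℝ) - (m : ℝ) := by
            rw [sub_mul, one_mul, hδval]
          calc α * min (1 - δ) (1/3 : ℝ) * (n : ℝ)
              ≤ α * (1 - δ) * (n : ℝ) :=
                mul_le_mul_of_nonneg_right
                  (mul_le_mul_of_nonneg_left (min_le_left _ _) hα.le) hnR.le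
            _ = α * ((1 - δ) * (n : ℝ)) := by ring
            _ = α * ((n : ℝ) - (m : ℝ)) := by rw [h1δ]
    · -- all parts small
      push_neg at hcase
      have hsmall : ∀ C ∈ P.parts, 3 * (W ∩ C).card < n := by
        intro C hC
        have : (W ∩ C).card ≤ m := Finset.le_sup (f := fun C => (W ∩ C).card) hC
        omega
      have htot : n ≤ 3 * ∑ C ∈ P.parts, (W ∩ C).card := by
        rw [sum_parts_inter P W, ← hn]; omega
      obtain ⟨I, hI, hI1, hI2⟩ := greedy n hn0 P.parts (fun C => (W ∩ C).card) hsmall htot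
      set S := I.biUnion fun C => W ∩ C with hS
      obtain ⟨hSW, hScard⟩ := biUnion_facts P W I hI
      rw [← hS] at hSW hScard
      rw [← hScard] at hI1 hI2
      have hne : S.Nonempty := Finset.card_pos.mp (by omega)
      have hSn : S.card < n := by
        have : S.card ≤ n := Finset.card_le_card hSW
        omega
      have hne' : (W \ S).Nonempty := by
        rw [← Finset.card_pos, Finset.card_sdiff_of_subset hSW, ← hn]; omega
      have hsep := sep_of_biUnion P W I hI
      rw [← hS] at hsep
      have hstep := step G P W α hexp S hSW hne hne' hsep
      refine le_trans ?_ hstep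
      have hWScard : ((W \ S).card : ℝ) = (n : ℝ) - (S.card : ℝ) := by
        rw [Finset.card_sdiff_of_subset hSW, ← hn]
        push_cast [Nat.cast_sub (le_of_lt hSn)]
        ring
      rw [hWScard]
      have h1 : (n : ℝ) ≤ 3 * (S.card : ℝ) := by exact_mod_cast hI1
      have h2 : 3 * (S.card : ℝ) ≤ 2 * (n : ℝ) := by
        have := le_of_lt hI2; exact_mod_cast this
      have hmin3 : α * min (1 - δ) (1/3 : ℝ) * (n : ℝ) ≤ α * ((n : ℝ)/3) :=
        le_of_eq_of_le (by ring_nf)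
          (le_of_le_of_eq (mul_le_mul_of_nonneg_right
            (mul_le_mul_of_nonneg_left (min_le_right _ _) hα.le) hnR.le) (by ring))
      rcases le_total ((S.card : ℝ)) ((n : ℝ) - (S.card : ℝ)) with h | h
      · rw [min_eq_left h]
        exact hmin3.trans (mul_le_mul_of_nonneg_left (by linarith) hα.le)
      · rw [min_eq_right h]
        exact hmin3.trans (mul_le_mul_of_nonneg_left (by linarith) hα.le)
  refine ⟨main, fun hhalf => ?_⟩
  have h2m : 2 * m ≤ n := by rw [hm, hC₀m]; exact hhalf C₀ hC₀
  have hδhalf : δ ≤ 1/2 := by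
    rw [hδ, div_le_iff₀ hnR]
    have : (2 : ℝ) * (m : ℝ) ≤ (n : ℝ) := by exact_mod_cast h2m
    linarith
  have : min (1 - δ) (1/3 : ℝ) = 1/3 := by
    rw [min_eq_right]; linarith
  calc α / 3 * (n : ℝ) = α * (1/3) * (n : ℝ) := by ring
    _ = α * min (1 - δ) (1/3 : ℝ) * (n : ℝ) := by rw [this]
    _ ≤ (interEdges G P : ℝ) := main


end HCSPaper
end
end

section
/- Let R(q,c) be the ring of cliques with q ≥ 3 and c ≥ 17. If a partition P = {V_1, …, V_k} of the vertex set of R(q,c) splits some clique C_i (i.e., C_i meets at least two parts of P), then the partition P' = {V_1∖C_i, …, V_k∖C_i, C_i} (discarding empty sets) has strictly greater modularity: Q(P') > Q(P). Consequently, in every modularity-maximizing partition of R(q,c), each of the q cliques is entirely contained in a single part. -/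
open Finset
open scoped Classical

noncomputable section

namespace HCSPaper

variable {V : Type*} [Fintype V] [DecidableEq V]

/-- The ring of cliques `R(q,c)` on vertex set `Fin q × Fin c`: for each `i`, the set
`{i} × Fin c` is a clique (the `i`-th clique), and the canonical vertices `v_i = (i, 0)`
form a cycle, `v_i` being adjacent to `v_{i+1 mod q}`. -/
def ringOfCliques (q c : ℕ) : SimpleGraph (Fin q × Fin c) :=
  SimpleGraph.fromRel fun x y =>
    x.1 = y.1 ∨
      (x.2.val = 0 ∧ y.2.val = 0 ∧
        (y.1.val = (x.1.val + 1) % q ∨ x.1.val = (y.1.val + 1) % q))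

/-- The `i`-th clique of the ring of cliques: the vertices `{i} × Fin c`. -/
def clique (q c : ℕ) (i : Fin q) : Finset (Fin q × Fin c) :=
  Finset.univ.filter fun x => x.1 = i

/-- The union of `len` cyclically consecutive cliques of `R(q,c)` starting at clique
`a`. -/
def cliqueBlock (q c : ℕ) (a : Fin q) (len : ℕ) : Finset (Fin q × Fin c) :=
  (Finset.range len).biUnion fun j =>
    clique q c ⟨(a.val + j) % q, Nat.mod_lt _ a.pos⟩

-- basic lemmas
lemma mem_clique {q c : ℕ} {i : Fin q} {x : Fin q × Fin c} :
    x ∈ clique q c i ↔ x.1 = i := by simp [clique]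

lemma card_clique (q c : ℕ) (i : Fin q) : (clique q c i).card = c := by
  have : clique q c i = {i} ×ˢ (univ : Finset (Fin c)) := by
    ext ⟨a, b⟩; simp [clique, Finset.mem_product, eq_comm]
  rw [this, Finset.card_product]
  simp

lemma roc_adj_same {q c : ℕ} {x y : Fin q × Fin c} (h1 : x.1 = y.1) (h2 : x ≠ y) :
    (ringOfCliques q c).Adj x y := by
  rw [ringOfCliques, SimpleGraph.fromRel_adj]
  exact ⟨h2, Or.inl (Or.inl h1)⟩

lemma roc_adj_cross {q c : ℕ} {x y : Fin q × Fin c}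
    (h : (ringOfCliques q c).Adj x y) (h1 : x.1 ≠ y.1) :
    x.2.val = 0 ∧ y.2.val = 0 ∧
      (y.1.val = (x.1.val + 1) % q ∨ x.1.val = (y.1.val + 1) % q) := by
  rw [ringOfCliques, SimpleGraph.fromRel_adj] at h
  obtain ⟨-, h | h⟩ := h
  · rcases h with h | h
    · exact absurd h h1
    · exact h
  · rcases h with h | ⟨h2, h3, h4⟩
    · exact absurd h.symm h1
    · exact ⟨h3, h2, h4.symm⟩

lemma mod_back {q a b : ℕ} (hq : 1 ≤ q) (hb : b < q) (h : a = (b + 1) % q) :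
    b = (a + (q - 1)) % q := by
  subst h
  rw [Nat.mod_add_mod]
  have : b + 1 + (q - 1) = b + q := by omega
  rw [this, Nat.add_mod_right, Nat.mod_eq_of_lt hb]

lemma deg_eq_degree (G : SimpleGraph V) (v : V) : deg G v = G.degree v := by
  rw [deg, Set.ncard_eq_toFinset_card']
  rfl

lemma roc_deg_lower {q c : ℕ} (hc : 1 ≤ c) (v : Fin q × Fin c) :
    c - 1 ≤ deg (ringOfCliques q c) v := by
  rw [deg_eq_degree, SimpleGraph.degree]
  have hsub : (clique q c v.1).erase v ⊆ (ringOfCliques q c).neighborFinset v := by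
    intro y hy
    rw [Finset.mem_erase, mem_clique] at hy
    rw [SimpleGraph.mem_neighborFinset]
    exact roc_adj_same hy.2.symm (Ne.symm hy.1)
  calc c - 1 = (clique q c v.1).card - 1 := by rw [card_clique]
    _ ≤ ((clique q c v.1).erase v).card := by rw [Finset.card_erase_of_mem (mem_clique.2 rfl)]
    _ ≤ _ := Finset.card_le_card hsub

lemma roc_deg_upper {q c : ℕ} (hq : 3 ≤ q) (hc : 1 ≤ c) (v : Fin q × Fin c) :
    deg (ringOfCliques q c) v ≤ c + 1 := by
  rw [deg_eq_degree, SimpleGraph.degree]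
  have hq0 : 0 < q := by omega
  have hc0 : 0 < c := hc
  set np : Fin q × Fin c := (⟨(v.1.val + 1) % q, Nat.mod_lt _ hq0⟩, ⟨0, hc0⟩) with hnp
  set nm : Fin q × Fin c := (⟨(v.1.val + (q - 1)) % q, Nat.mod_lt _ hq0⟩, ⟨0, hc0⟩) with hnm
  have hsub : (ringOfCliques q c).neighborFinset v ⊆
      insert np (insert nm ((clique q c v.1).erase v)) := by
    intro y hy
    rw [SimpleGraph.mem_neighborFinset] at hy
    by_cases h1 : v.1 = y.1
    · exact Finset.mem_insert_of_mem (Finset.mem_insert_of_mem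
        (Finset.mem_erase.2 ⟨hy.ne', mem_clique.2 h1.symm⟩))
    · obtain ⟨hv2, hy2, hor⟩ := roc_adj_cross hy h1
      rcases hor with h | h
      · have : y = np := by
          apply Prod.ext
          · exact Fin.ext h
          · exact Fin.ext hy2
        rw [this]; exact Finset.mem_insert_self _ _
      · have h2 : y.1.val = (v.1.val + (q - 1)) % q := mod_back (by omega) y.1.isLt h
        have : y = nm := by
          apply Prod.ext
          · exact Fin.ext h2
          · exact Fin.ext hy2
        rw [this]; exact Finset.mem_insert_of_mem (Finset.mem_insert_self _ _)
  have h1 := Finset.card_insert_le np (insert nm ((clique q c v.1).erase v))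
  have h2 := Finset.card_insert_le nm ((clique q c v.1).erase v)
  have h3 : ((clique q c v.1).erase v).card = c - 1 := by
    rw [Finset.card_erase_of_mem (mem_clique.2 rfl), card_clique]
  have h4 := Finset.card_le_card hsub
  omega


lemma edgeCount_eq (G : SimpleGraph V) : edgeCount G = G.edgeFinset.card := by
  rw [edgeCount, Set.ncard_eq_toFinset_card']
  congr 1

lemma two_m_lower {q c : ℕ} (hq : 3 ≤ q) (hc : 1 ≤ c) :
    q * c * (c - 1) ≤ 2 * edgeCount (ringOfCliques q c) := by
  rw [edgeCount_eq]
  rw [← SimpleGraph.sum_degrees_eq_twice_card_edges]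
  calc q * c * (c - 1) = ∑ _v : Fin q × Fin c, (c - 1) := by
        rw [Finset.sum_const, smul_eq_mul, Finset.card_univ, Fintype.card_prod,
          Fintype.card_fin, Fintype.card_fin]
    _ ≤ ∑ v : Fin q × Fin c, (ringOfCliques q c).degree v := by
        apply Finset.sum_le_sum
        intro v _
        have := roc_deg_lower (q := q) hc v
        rwa [deg_eq_degree] at this

lemma cross_pairs {q c : ℕ} (hq : 3 ≤ q) (hc : 1 ≤ c) (i : Fin q) :
    ((((clique q c i) ×ˢ ((univ : Finset (Fin q × Fin c)) \ clique q c i))).filter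
      (fun p => (ringOfCliques q c).Adj p.1 p.2)).card ≤ 2 := by
  have hq0 : 0 < q := by omega
  have hc0 : 0 < c := hc
  set np : Fin q × Fin c := (⟨(i.val + 1) % q, Nat.mod_lt _ hq0⟩, ⟨0, hc0⟩)
  set nm : Fin q × Fin c := (⟨(i.val + (q - 1)) % q, Nat.mod_lt _ hq0⟩, ⟨0, hc0⟩)
  set v0 : Fin q × Fin c := (i, ⟨0, hc0⟩)
  have hsub : (((clique q c i) ×ˢ ((univ : Finset (Fin q × Fin c)) \ clique q c i))).filter
      (fun p => (ringOfCliques q c).Adj p.1 p.2) ⊆ {(v0, np), (v0, nm)} := by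
    intro p hp
    rw [Finset.mem_filter, Finset.mem_product, Finset.mem_sdiff] at hp
    obtain ⟨⟨h1, -, h2⟩, hadj⟩ := hp
    rw [mem_clique] at h1 h2
    have hne : p.1.1 ≠ p.2.1 := by rw [h1]; exact fun h => h2 h.symm
    obtain ⟨ha, hb, hor⟩ := roc_adj_cross hadj hne
    have hp1 : p.1 = v0 := Prod.ext (by exact h1) (Fin.ext ha)
    rcases hor with h | h
    · have hp2 : p.2 = np := Prod.ext (Fin.ext (by rw [h, h1])) (Fin.ext hb)
      rw [Finset.mem_insert]
      exact Or.inl (by rw [← hp1, ← hp2])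
    · have h2' : p.2.1.val = (i.val + (q - 1)) % q := by
        rw [← h1] at *
        exact mod_back (by omega) p.2.1.isLt h
      have hp2 : p.2 = nm := Prod.ext (Fin.ext h2') (Fin.ext hb)
      rw [Finset.mem_insert, Finset.mem_singleton]
      exact Or.inr (by rw [← hp1, ← hp2])
  calc _ ≤ ({(v0, np), (v0, nm)} : Finset _).card := Finset.card_le_card hsub
    _ ≤ 2 := by
        apply le_trans (Finset.card_insert_le _ _)
        simp


set_option maxHeartbeats 1000000 in
lemma key {q c : ℕ} (hq : 3 ≤ q) (hc : 17 ≤ c)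
    (P P' : Finpartition (Finset.univ : Finset (Fin q × Fin c))) (i : Fin q)
    (hsplit : ∃ t₁ ∈ P.parts, ∃ t₂ ∈ P.parts, t₁ ≠ t₂ ∧
      (clique q c i ∩ t₁).Nonempty ∧ (clique q c i ∩ t₂).Nonempty)
    (hP' : P'.parts = insert (clique q c i)
      ((P.parts.image fun t => t \ clique q c i).erase ∅)) :
    Qmod (ringOfCliques q c) P < Qmod (ringOfCliques q c) P' := by
  obtain ⟨t₁, ht₁, t₂, ht₂, htne, hn₁, hn₂⟩ := hsplit
  set G := ringOfCliques q c with hG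
  set C := clique q c i with hCdef
  set D := (univ : Finset (Fin q × Fin c)) \ C with hDdef
  set M : ℝ := 2 * (edgeCount G : ℝ) with hMdef
  set w : (Fin q × Fin c) → (Fin q × Fin c) → ℝ := fun u v =>
    (if G.Adj u v then (1 : ℝ) else 0) - (deg G u : ℝ) * (deg G v : ℝ) / M with hwdef
  set χ : (Fin q × Fin c) → (Fin q × Fin c) → ℝ := fun u v =>
    if ∃ t ∈ P.parts, u ∈ t ∧ v ∈ t then (1 : ℝ) else 0 with hχdef
  set χ' : (Fin q × Fin c) → (Fin q × Fin c) → ℝ := fun u v =>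
    if ∃ t ∈ P'.parts, u ∈ t ∧ v ∈ t then (1 : ℝ) else 0 with hχ'def
  set α : ℝ := 1 - ((c : ℝ) + 1) ^ 2 / M with hαdef
  have hc17 : (17 : ℝ) ≤ (c : ℝ) := by exact_mod_cast hc
  -- edge count bound
  have hM3 : (3 : ℝ) * (c : ℝ) * ((c : ℝ) - 1) ≤ M := by
    have h1 := two_m_lower (q := q) (c := c) hq (by omega)
    have h2 : 3 * c * (c - 1) ≤ 2 * edgeCount (ringOfCliques q c) :=
      le_trans (Nat.mul_le_mul_right _ (Nat.mul_le_mul_right _ hq)) h1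
    have h3 : ((3 * c * (c - 1) : ℕ) : ℝ) ≤ ((2 * edgeCount (ringOfCliques q c) : ℕ) : ℝ) := by
      exact_mod_cast h2
    rw [hMdef, hG]
    push_cast [Nat.cast_sub (show 1 ≤ c by omega)] at h3
    convert h3 using 2 <;> push_cast <;> ring
  have hM0 : (0 : ℝ) < M := lt_of_lt_of_le (by nlinarith) hM3
  have hα0 : (0 : ℝ) ≤ α := by
    rw [hαdef, sub_nonneg, div_le_one hM0]
    nlinarith
  -- degree bounds
  have hdub : ∀ u : Fin q × Fin c, (deg G u : ℝ) ≤ (c : ℝ) + 1 := by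
    intro u
    have := roc_deg_upper hq (show 1 ≤ c by omega) u
    rw [hG]
    exact_mod_cast this
  -- w bounds
  have hw_adj : ∀ u v, G.Adj u v → α ≤ w u v := by
    intro u v hadj
    rw [hwdef, hαdef]
    simp only [if_pos hadj]
    have h1 : (deg G u : ℝ) * (deg G v : ℝ) ≤ ((c : ℝ) + 1) ^ 2 := by
      have := mul_le_mul (hdub u) (hdub v) (by positivity) (by positivity)
      nlinarith
    have h2 : (deg G u : ℝ) * (deg G v : ℝ) / M ≤ ((c : ℝ) + 1) ^ 2 / M := by gcongr
    linarith
  have hw_le : ∀ u v, w u v ≤ (if G.Adj u v then (1 : ℝ) else 0) := by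
    intro u v
    rw [hwdef]
    have : (0 : ℝ) ≤ (deg G u : ℝ) * (deg G v : ℝ) / M := by positivity
    simp only
    linarith
  -- χ facts
  have hχ0 : ∀ u v, (0 : ℝ) ≤ χ u v := by
    intro u v; rw [hχdef]; simp only; split <;> norm_num
  have hχ1 : ∀ u v, χ u v ≤ 1 := by
    intro u v; rw [hχdef]; simp only; split <;> norm_num
  have hχdiag : ∀ u, χ u u = 1 := by
    intro u
    rw [hχdef]
    simp only
    rw [if_pos]
    obtain ⟨t, ht, hu⟩ := P.exists_mem (Finset.mem_univ u)
    exact ⟨t, ht, hu, hu⟩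
  have hχsym : ∀ u v, χ u v = χ v u := by
    intro u v
    rw [hχdef]
    simp only
    exact if_congr ⟨fun ⟨t, ht, h1, h2⟩ => ⟨t, ht, h2, h1⟩,
      fun ⟨t, ht, h1, h2⟩ => ⟨t, ht, h2, h1⟩⟩ rfl rfl
  have hwsym : ∀ u v, w u v = w v u := by
    intro u v
    rw [hwdef]
    simp only
    rw [if_congr (G.adj_comm u v) rfl rfl, mul_comm ((deg G u : ℝ))]
  -- χ' facts
  have hCmem : C ∈ P'.parts := by rw [hP']; exact Finset.mem_insert_self _ _
  have hCC' : ∀ u ∈ C, ∀ v ∈ C, χ' u v = 1 := by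
    intro u hu v hv
    rw [hχ'def]
    simp only
    exact if_pos ⟨C, hCmem, hu, hv⟩
  have hCD' : ∀ u ∈ C, ∀ v ∈ D, χ' u v = 0 := by
    intro u hu v hv
    rw [hDdef, Finset.mem_sdiff] at hv
    rw [hχ'def]
    simp only
    rw [if_neg]
    rintro ⟨t, ht, hut, hvt⟩
    rw [hP', Finset.mem_insert] at ht
    rcases ht with rfl | ht
    · exact hv.2 hvt
    · rw [Finset.mem_erase, Finset.mem_image] at ht
      obtain ⟨htne, s, hs, rfl⟩ := ht
      exact (Finset.mem_sdiff.1 hut).2 hu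
  have hDC' : ∀ u ∈ D, ∀ v ∈ C, χ' u v = 0 := by
    intro u hu v hv
    rw [hDdef, Finset.mem_sdiff] at hu
    rw [hχ'def]
    simp only
    rw [if_neg]
    rintro ⟨t, ht, hut, hvt⟩
    rw [hP', Finset.mem_insert] at ht
    rcases ht with rfl | ht
    · exact hu.2 hut
    · rw [Finset.mem_erase, Finset.mem_image] at ht
      obtain ⟨htne, s, hs, rfl⟩ := ht
      exact (Finset.mem_sdiff.1 hvt).2 hv
  have hDD' : ∀ u ∈ D, ∀ v ∈ D, χ' u v = χ u v := by
    intro u hu v hv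
    rw [hDdef, Finset.mem_sdiff] at hu hv
    rw [hχ'def, hχdef]
    simp only
    apply if_congr _ rfl rfl
    constructor
    · rintro ⟨t, ht, hut, hvt⟩
      rw [hP', Finset.mem_insert] at ht
      rcases ht with rfl | ht
      · exact absurd hut hu.2
      · rw [Finset.mem_erase, Finset.mem_image] at ht
        obtain ⟨htne, s, hs, rfl⟩ := ht
        exact ⟨s, hs, (Finset.mem_sdiff.1 hut).1, (Finset.mem_sdiff.1 hvt).1⟩
    · rintro ⟨s, hs, hus, hvs⟩
      refine ⟨s \ C, ?_, Finset.mem_sdiff.2 ⟨hus, hu.2⟩, Finset.mem_sdiff.2 ⟨hvs, hv.2⟩⟩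
      rw [hP', Finset.mem_insert]
      right
      rw [Finset.mem_erase]
      exact ⟨Finset.ne_empty_of_mem (Finset.mem_sdiff.2 ⟨hus, hu.2⟩),
        Finset.mem_image_of_mem _ hs⟩
  -- expressing Qmod via w and χ
  have hQP : Qmod G P = (1 / M) * ∑ u, ∑ v, w u v * χ u v := rfl
  have hQP' : Qmod G P' = (1 / M) * ∑ u, ∑ v, w u v * χ' u v := rfl
  have hsum : ∀ g : (Fin q × Fin c) → ℝ, ∑ u, g u = (∑ u ∈ C, g u) + ∑ u ∈ D, g u := by
    intro g
    rw [hDdef, ← Finset.sum_sdiff (Finset.subset_univ C)]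
    ring
  have hdiff : Qmod G P' - Qmod G P =
      (1 / M) * ∑ u, ∑ v, (w u v * χ' u v - w u v * χ u v) := by
    rw [hQP, hQP', ← mul_sub]
    congr 1
    rw [← Finset.sum_sub_distrib]
    exact Finset.sum_congr rfl fun u _ => (Finset.sum_sub_distrib _ _).symm
  have hTsplit : ∑ u, ∑ v, (w u v * χ' u v - w u v * χ u v) =
      ((∑ u ∈ C, ∑ v ∈ C, w u v * (1 - χ u v))
        - ∑ u ∈ C, ∑ v ∈ D, w u v * χ u v)
        - ∑ u ∈ D, ∑ v ∈ C, w u v * χ u v := by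
    rw [hsum (fun u => ∑ v, (w u v * χ' u v - w u v * χ u v))]
    have e1 : ∑ u ∈ C, ∑ v, (w u v * χ' u v - w u v * χ u v)
        = (∑ u ∈ C, ∑ v ∈ C, w u v * (1 - χ u v)) - ∑ u ∈ C, ∑ v ∈ D, w u v * χ u v := by
      rw [← Finset.sum_sub_distrib]
      apply Finset.sum_congr rfl
      intro u hu
      rw [hsum (fun v => w u v * χ' u v - w u v * χ u v)]
      have e11 : ∑ v ∈ C, (w u v * χ' u v - w u v * χ u v)
          = ∑ v ∈ C, w u v * (1 - χ u v) := by
        apply Finset.sum_congr rfl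
        intro v hv
        rw [hCC' u hu v hv]
        ring
      have e12 : ∑ v ∈ D, (w u v * χ' u v - w u v * χ u v)
          = -∑ v ∈ D, w u v * χ u v := by
        rw [← Finset.sum_neg_distrib]
        apply Finset.sum_congr rfl
        intro v hv
        rw [hCD' u hu v hv]
        ring
      rw [e11, e12]
      ring
    have e2 : ∑ u ∈ D, ∑ v, (w u v * χ' u v - w u v * χ u v)
        = -∑ u ∈ D, ∑ v ∈ C, w u v * χ u v := by
      rw [← Finset.sum_neg_distrib]
      apply Finset.sum_congr rfl
      intro u hu
      rw [hsum (fun v => w u v * χ' u v - w u v * χ u v)]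
      have e21 : ∑ v ∈ C, (w u v * χ' u v - w u v * χ u v)
          = -∑ v ∈ C, w u v * χ u v := by
        rw [← Finset.sum_neg_distrib]
        apply Finset.sum_congr rfl
        intro v hv
        rw [hDC' u hu v hv]
        ring
      have e22 : ∑ v ∈ D, (w u v * χ' u v - w u v * χ u v) = 0 := by
        apply Finset.sum_eq_zero
        intro v hv
        rw [hDD' u hu v hv]
        ring
      rw [e21, e22]
      ring
    rw [e1, e2]
    ring
  -- DC sum equals CD sum
  have hDCeq : ∑ u ∈ D, ∑ v ∈ C, w u v * χ u v = ∑ u ∈ C, ∑ v ∈ D, w u v * χ u v := by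
    rw [Finset.sum_comm]
    apply Finset.sum_congr rfl
    intro u hu
    apply Finset.sum_congr rfl
    intro v hv
    rw [hwsym v u, hχsym v u]
  -- CD sum is at most 2
  have hCDle : ∑ u ∈ C, ∑ v ∈ D, w u v * χ u v ≤ 2 := by
    have step1 : ∑ u ∈ C, ∑ v ∈ D, w u v * χ u v
        ≤ ∑ u ∈ C, ∑ v ∈ D, (if G.Adj u v then (1 : ℝ) else 0) := by
      apply Finset.sum_le_sum
      intro u _
      apply Finset.sum_le_sum
      intro v _
      have h1 := hw_le u v
      have h2 := hχ0 u v
      have h3 := hχ1 u v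
      by_cases hadj : G.Adj u v
      · rw [if_pos hadj] at h1 ⊢
        nlinarith
      · rw [if_neg hadj] at h1 ⊢
        nlinarith
    refine le_trans step1 ?_
    rw [← Finset.sum_product', Finset.sum_boole]
    have h2 := cross_pairs hq (show 1 ≤ c by omega) i
    rw [← hG, ← hCdef, ← hDdef] at h2
    exact_mod_cast h2
  -- main gain estimate
  have hCfst : ∀ x : Fin q × Fin c, x ∈ C → x.1 = i := by
    intro x hx
    rw [hCdef] at hx
    exact mem_clique.1 hx
  have hCCge : 2 * ((c : ℝ) - 1) * α ≤ ∑ u ∈ C, ∑ v ∈ C, w u v * (1 - χ u v) := by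
    set A := C ∩ t₁ with hA
    set B := C \ t₁ with hB
    set S₀ := A ×ˢ B ∪ B ×ˢ A with hS₀
    have hS₀sub : S₀ ⊆ C ×ˢ C := by
      intro p hp
      rw [hS₀, Finset.mem_union, Finset.mem_product, Finset.mem_product] at hp
      rw [Finset.mem_product]
      rcases hp with ⟨h1, h2⟩ | ⟨h1, h2⟩
      · exact ⟨Finset.mem_of_mem_inter_left h1, (Finset.mem_sdiff.1 h2).1⟩
      · exact ⟨(Finset.mem_sdiff.1 h1).1, Finset.mem_of_mem_inter_left h2⟩
    have hsep : ∀ p ∈ S₀, α ≤ w p.1 p.2 ∧ χ p.1 p.2 = 0 := by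
      intro p hp
      rw [hS₀, Finset.mem_union, Finset.mem_product, Finset.mem_product] at hp
      have hmain : p.1 ∈ C ∧ p.2 ∈ C ∧
          ((p.1 ∈ t₁ ∧ p.2 ∉ t₁) ∨ (p.1 ∉ t₁ ∧ p.2 ∈ t₁)) := by
        rcases hp with ⟨h1, h2⟩ | ⟨h1, h2⟩
        · have h1' := Finset.mem_inter.1 h1
          have h2' := Finset.mem_sdiff.1 h2
          exact ⟨h1'.1, h2'.1, Or.inl ⟨h1'.2, h2'.2⟩⟩
        · have h1' := Finset.mem_sdiff.1 h1
          have h2' := Finset.mem_inter.1 h2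
          exact ⟨h1'.1, h2'.1, Or.inr ⟨h1'.2, h2'.2⟩⟩
      obtain ⟨hp1C, hp2C, hcase⟩ := hmain
      have hne : p.1 ≠ p.2 := by
        rintro hfeq
        rcases hcase with ⟨h1, h2⟩ | ⟨h1, h2⟩
        · exact h2 (hfeq ▸ h1)
        · exact h1 (hfeq ▸ h2)
      have hadj : G.Adj p.1 p.2 := by
        rw [hG]
        exact roc_adj_same (by rw [hCfst _ hp1C, hCfst _ hp2C]) hne
      have hchi : χ p.1 p.2 = 0 := by
        rw [hχdef]
        simp only
        rw [if_neg]
        rintro ⟨t, ht, h1t, h2t⟩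
        rcases hcase with ⟨h1, h2⟩ | ⟨h1, h2⟩
        · exact h2 (P.eq_of_mem_parts ht ht₁ h1t h1 ▸ h2t)
        · exact h1 (P.eq_of_mem_parts ht ht₁ h2t h2 ▸ h1t)
      exact ⟨hw_adj _ _ hadj, hchi⟩
    have hnn : ∀ p ∈ C ×ˢ C, (0 : ℝ) ≤ w p.1 p.2 * (1 - χ p.1 p.2) := by
      intro p hp
      rw [Finset.mem_product] at hp
      by_cases hex : ∃ t ∈ P.parts, p.1 ∈ t ∧ p.2 ∈ t
      · have h1 : χ p.1 p.2 = 1 := by rw [hχdef]; simp only; exact if_pos hex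
        rw [h1]
        simp
      · have hχz : χ p.1 p.2 = 0 := by rw [hχdef]; simp only; exact if_neg hex
        have hne : p.1 ≠ p.2 := by
          rintro hfeq
          obtain ⟨t, ht, hmem⟩ := P.exists_mem (Finset.mem_univ p.1)
          exact hex ⟨t, ht, hmem, hfeq ▸ hmem⟩
        have hadj : G.Adj p.1 p.2 := by
          rw [hG]
          exact roc_adj_same (by rw [hCfst _ hp.1, hCfst _ hp.2]) hne
        rw [hχz]
        have := hw_adj _ _ hadj
        nlinarith
    have hdisjAB : Disjoint A B := by
      rw [Finset.disjoint_left]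
      intro a ha hb
      rw [hA, Finset.mem_inter] at ha
      rw [hB, Finset.mem_sdiff] at hb
      exact hb.2 ha.2
    have hdisjS : Disjoint (A ×ˢ B) (B ×ˢ A) := by
      rw [Finset.disjoint_left]
      intro p hp hp'
      rw [Finset.mem_product] at hp hp'
      exact (Finset.disjoint_left.1 hdisjAB) hp.1 hp'.1
    have hcardS : S₀.card = A.card * B.card + B.card * A.card := by
      rw [hS₀, Finset.card_union_of_disjoint hdisjS, Finset.card_product, Finset.card_product]
    have hA1 : 1 ≤ A.card := by
      rw [hA]
      exact Finset.card_pos.2 hn₁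
    have hB1 : 1 ≤ B.card := by
      apply Finset.card_pos.2
      obtain ⟨x, hx⟩ := hn₂
      rw [Finset.mem_inter] at hx
      refine ⟨x, ?_⟩
      rw [hB, Finset.mem_sdiff]
      refine ⟨hx.1, fun hxt₁ => htne ?_⟩
      exact P.eq_of_mem_parts ht₁ ht₂ hxt₁ hx.2
    have hABc : A.card + B.card = c := by
      rw [hA, hB, Finset.card_inter_add_card_sdiff, hCdef, card_clique]
    have hcard2 : 2 * (c - 1) ≤ S₀.card := by
      obtain ⟨a₀, ha₀⟩ : ∃ a₀, A.card = a₀ + 1 := ⟨A.card - 1, by omega⟩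
      obtain ⟨b₀, hb₀⟩ : ∃ b₀, B.card = b₀ + 1 := ⟨B.card - 1, by omega⟩
      have h2 : c - 1 = a₀ + b₀ + 1 := by omega
      rw [hcardS, ha₀, hb₀, h2]
      have h1 : (a₀ + 1) * (b₀ + 1) = a₀ * b₀ + a₀ + b₀ + 1 := by ring
      have h1' : (b₀ + 1) * (a₀ + 1) = a₀ * b₀ + a₀ + b₀ + 1 := by ring
      rw [h1, h1']
      generalize a₀ * b₀ = k
      omega
    calc 2 * ((c : ℝ) - 1) * α ≤ (S₀.card : ℝ) * α := by
          apply mul_le_mul_of_nonneg_right _ hα0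
          have h3 : ((2 * (c - 1) : ℕ) : ℝ) ≤ (S₀.card : ℝ) := by exact_mod_cast hcard2
          push_cast [Nat.cast_sub (show 1 ≤ c by omega)] at h3
          linarith
      _ ≤ ∑ p ∈ S₀, w p.1 p.2 * (1 - χ p.1 p.2) := by
          have h4 := Finset.card_nsmul_le_sum S₀ (fun p => w p.1 p.2 * (1 - χ p.1 p.2)) α
            (fun p hp => by
              have hs := hsep p hp
              show α ≤ w p.1 p.2 * (1 - χ p.1 p.2)
              rw [hs.2]
              simpa using hs.1)
          rwa [nsmul_eq_mul] at h4
      _ ≤ ∑ p ∈ C ×ˢ C, w p.1 p.2 * (1 - χ p.1 p.2) :=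
          Finset.sum_le_sum_of_subset_of_nonneg hS₀sub (fun p hp _ => hnn p hp)
      _ = ∑ u ∈ C, ∑ v ∈ C, w u v * (1 - χ u v) := by rw [Finset.sum_product]
  -- numeric conclusion
  have hnum : (4 : ℝ) < 2 * ((c : ℝ) - 1) * α := by
    have hform : 2 * ((c : ℝ) - 1) * α = 2 * ((c : ℝ) - 1) * (M - ((c : ℝ) + 1) ^ 2) / M := by
      rw [hαdef]
      field_simp
    rw [hform, lt_div_iff₀ hM0]
    nlinarith [mul_le_mul_of_nonneg_left hM3 (show (0 : ℝ) ≤ 2 * (c : ℝ) - 6 by linarith)]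
  have hDC2 : ∑ u ∈ D, ∑ v ∈ C, w u v * χ u v ≤ 2 := by rw [hDCeq]; exact hCDle
  have hfin : (0 : ℝ) < (1 / M) * ∑ u, ∑ v, (w u v * χ' u v - w u v * χ u v) := by
    apply mul_pos (by positivity)
    rw [hTsplit]
    linarith
  linarith [hdiff, hfin]


/-- Let `R(q,c)` be the ring of cliques with `q ≥ 3`, `c ≥ 17`.  If a partition `P`
splits some clique `C_i` (it meets at least two parts), then the partition
`P' = {V_1∖C_i, …, V_k∖C_i, C_i}` (discarding empty sets) has strictly greater
modularity; consequently, in every modularity-maximizing partition each clique is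
entirely contained in a single part. -/
theorem ringOfCliques_split_clique (q c : ℕ) (hq : 3 ≤ q) (hc : 17 ≤ c) :
    (∀ (P : Finpartition (Finset.univ : Finset (Fin q × Fin c))) (i : Fin q),
      (∃ t₁ ∈ P.parts, ∃ t₂ ∈ P.parts, t₁ ≠ t₂ ∧
        (clique q c i ∩ t₁).Nonempty ∧ (clique q c i ∩ t₂).Nonempty) →
      ∀ P' : Finpartition (Finset.univ : Finset (Fin q × Fin c)),
        P'.parts =
          insert (clique q c i)
            ((P.parts.image fun t => t \ clique q c i).erase ∅) →
        Qmod (ringOfCliques q c) P < Qmod (ringOfCliques q c) P') ∧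
    (∀ P : Finpartition (Finset.univ : Finset (Fin q × Fin c)),
      (∀ P', Qmod (ringOfCliques q c) P' ≤ Qmod (ringOfCliques q c) P) →
      ∀ i : Fin q, ∃ t ∈ P.parts, clique q c i ⊆ t) := by
  constructor
  · intro P i hsplit P' hP'
    exact key hq hc P P' i hsplit hP'
  · intro P hmax i
    by_contra hno
    push_neg at hno
    have hc0 : 0 < c := by omega
    set C := clique q c i with hCdef
    have hx0 : (i, (⟨0, hc0⟩ : Fin c)) ∈ C := mem_clique.2 rfl
    obtain ⟨t₁, ht₁, hx0t₁⟩ := P.exists_mem (Finset.mem_univ (i, (⟨0, hc0⟩ : Fin c)))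
    obtain ⟨y, hyC, hyt₁⟩ := Finset.not_subset.1 (hno t₁ ht₁)
    obtain ⟨t₂, ht₂, hyt₂⟩ := P.exists_mem (Finset.mem_univ y)
    have htne : t₁ ≠ t₂ := fun h => hyt₁ (h ▸ hyt₂)
    have hCne : C ≠ ∅ := Finset.ne_empty_of_mem hx0
    have hsupindep : (insert C (P.parts.image fun t => t \ C)).SupIndep id := by
      rw [Finset.supIndep_iff_pairwiseDisjoint]
      intro x hx y hy hxy
      simp only [Finset.coe_insert, Set.mem_insert_iff, Finset.coe_image, Set.mem_image,
        Finset.mem_coe] at hx hy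
      rcases hx with rfl | ⟨s, hs, rfl⟩
      · rcases hy with rfl | ⟨s', hs', rfl⟩
        · exact absurd rfl hxy
        · exact Finset.disjoint_sdiff
      · rcases hy with rfl | ⟨s', hs', rfl⟩
        · exact Finset.sdiff_disjoint
        · have hss' : s ≠ s' := fun h => hxy (by rw [h])
          exact (P.disjoint hs hs' hss').mono Finset.sdiff_subset Finset.sdiff_subset
    have hsup : (insert C (P.parts.image fun t => t \ C)).sup id = univ := by
      apply le_antisymm
      · exact Finset.sup_le fun b _ => (Finset.subset_univ b : _)
      · intro x hx
        rw [Finset.mem_sup]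
        by_cases hxC : x ∈ C
        · exact ⟨C, Finset.mem_insert_self _ _, hxC⟩
        · obtain ⟨t, ht, hxt⟩ := P.exists_mem (Finset.mem_univ x)
          exact ⟨t \ C, Finset.mem_insert_of_mem (Finset.mem_image_of_mem _ ht),
            Finset.mem_sdiff.2 ⟨hxt, hxC⟩⟩
    set P' := Finpartition.ofErase (insert C (P.parts.image fun t => t \ C)) hsupindep hsup
      with hP'def
    have hP'parts : P'.parts = insert C ((P.parts.image fun t => t \ C).erase ∅) := by
      rw [hP'def]
      show (insert C (P.parts.image fun t => t \ C)).erase ⊥ = _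
      rw [Finset.bot_eq_empty, Finset.erase_insert_of_ne hCne]
    have hkey := key hq hc P P' i
      ⟨t₁, ht₁, t₂, ht₂, htne, ⟨_, Finset.mem_inter.2 ⟨hx0, hx0t₁⟩⟩,
        ⟨y, Finset.mem_inter.2 ⟨hyC, hyt₂⟩⟩⟩ hP'parts
    exact absurd (hmax P') (not_le.2 hkey)


end HCSPaper
end
end

section
/- Let R(q,c) be the ring of cliques with q ≥ 2 and c ≥ 2, and fix k with 2 ≤ k ≤ q. Among all partitions of the vertex set of R(q,c) into k parts each consisting of cyclically consecutive cliques, the modularity is maximized exactly by those partitions whose block sizes are as equal as possible, i.e., every block consists of either ⌊q/k⌋ or ⌈q/k⌉ cliques; equivalently, modularity is maximized precisely when b_1² + ⋯ + b_k² is minimized over compositions b_1 + ⋯ + b_k = q. -/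
open Finset
open scoped Classical

noncomputable section

namespace HCSPaper

variable {V : Type*} [Fintype V] [DecidableEq V]

/-- The partition of the ring of cliques into `k` contiguous blocks of cliques: starting
at clique `r`, the `i`-th part is the union of the `b i` cyclically consecutive cliques
that follow the first `b 0 + ⋯ + b (i-1)` ones. -/
def blockParts (q c : ℕ) (hq : 0 < q) {k : ℕ} (r : ℕ) (b : Fin k → ℕ) :
    Finset (Finset (Fin q × Fin c)) :=
  Finset.univ.image fun i : Fin k =>
    cliqueBlock q c
      ⟨(r + ∑ j ∈ Finset.univ.filter fun j : Fin k => j < i, b j) % q, Nat.mod_lt _ hq⟩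
      (b i)

def Cyc (q i i' : ℕ) : Prop := i' = (i + 1) % q ∨ i = (i' + 1) % q

lemma mod_inj {q a j j' : ℕ} (hj : j < q) (hj' : j' < q)
    (h : (a + j) % q = (a + j') % q) : j = j' := by
  have h2 : j ≡ j' [MOD q] := Nat.ModEq.add_left_cancel' a h
  simpa [Nat.ModEq, Nat.mod_eq_of_lt hj, Nat.mod_eq_of_lt hj'] using h2

lemma succ_mod_ne {q a : ℕ} (hq : 2 ≤ q) (ha : a < q) : (a + 1) % q ≠ a := by
  intro h
  rcases Nat.lt_or_ge (a + 1) q with h1 | h1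
  · rw [Nat.mod_eq_of_lt h1] at h; omega
  · have he : a + 1 = q := by omega
    rw [he, Nat.mod_self] at h; omega

lemma cyc_ne {q i i' : ℕ} (hq : 2 ≤ q) (hi : i < q) (hi' : i' < q)
    (h : Cyc q i i') : i ≠ i' := by
  rintro rfl
  rcases h with h | h <;> exact succ_mod_ne hq hi h.symm

lemma adj_iff {q c : ℕ} (hq : 2 ≤ q) (u v : Fin q × Fin c) :
    (ringOfCliques q c).Adj u v ↔
      ((u.1 = v.1 ∧ u.2 ≠ v.2) ∨
        (u.2.val = 0 ∧ v.2.val = 0 ∧ Cyc q u.1.val v.1.val)) := by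
  rw [ringOfCliques, SimpleGraph.fromRel_adj]
  constructor
  · rintro ⟨hne, h | h⟩
    · rcases h with h | ⟨h0, h1, h2⟩
      · exact Or.inl ⟨h, fun h2 => hne (Prod.ext h h2)⟩
      · exact Or.inr ⟨h0, h1, h2⟩
    · rcases h with h | ⟨h0, h1, h2⟩
      · exact Or.inl ⟨h.symm, fun h2 => hne (Prod.ext h.symm h2)⟩
      · exact Or.inr ⟨h1, h0, h2.symm⟩
  · rintro (⟨h1, h2⟩ | ⟨h0, h1, h2⟩)
    · exact ⟨fun he => h2 (congrArg Prod.snd he), Or.inl (Or.inl h1)⟩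
    · refine ⟨fun he => ?_, Or.inl (Or.inr ⟨h0, h1, h2⟩)⟩
      exact cyc_ne hq u.1.isLt v.1.isLt h2 (by rw [he])

/-- indicator splitting of the adjacency -/
lemma adj_ind {q c : ℕ} (hq : 2 ≤ q) (u v : Fin q × Fin c) :
    (if (ringOfCliques q c).Adj u v then (1 : ℕ) else 0) =
      (if u.1 = v.1 ∧ u.2 ≠ v.2 then 1 else 0) +
      (if u.2.val = 0 ∧ v.2.val = 0 ∧ Cyc q u.1.val v.1.val then 1 else 0) := by
  by_cases h1 : u.1 = v.1 ∧ u.2 ≠ v.2 <;>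
    by_cases h2 : u.2.val = 0 ∧ v.2.val = 0 ∧ Cyc q u.1.val v.1.val
  · exact absurd (congrArg Fin.val h1.1) (cyc_ne hq u.1.isLt v.1.isLt h2.2.2)
  · rw [if_pos ((adj_iff hq u v).2 (Or.inl h1)), if_pos h1, if_neg h2]
  · rw [if_pos ((adj_iff hq u v).2 (Or.inr h2)), if_neg h1, if_pos h2]
  · rw [if_neg (fun h => ((adj_iff hq u v).1 h).elim h1 h2), if_neg h1, if_neg h2]

lemma mem_cliqueBlock {q c : ℕ} {a : Fin q} {ℓ : ℕ} {x : Fin q × Fin c} :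
    x ∈ cliqueBlock q c a ℓ ↔ ∃ j < ℓ, x.1.val = (a.val + j) % q := by
  simp only [cliqueBlock, Finset.mem_biUnion, Finset.mem_range, clique,
    Finset.mem_filter, Finset.mem_univ, true_and]
  constructor
  · rintro ⟨j, hj, h⟩; exact ⟨j, hj, by rw [h]⟩
  · rintro ⟨j, hj, h⟩; exact ⟨j, hj, Fin.ext h⟩

/-- sum over a clique block, for `ℓ ≤ q` -/
lemma sum_cliqueBlock {q c : ℕ} {M : Type*} [AddCommMonoid M] (hq : 0 < q)
    (a : Fin q) {ℓ : ℕ} (hℓ : ℓ ≤ q) (F : Fin q × Fin c → M) :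
    ∑ x ∈ cliqueBlock q c a ℓ, F x =
      ∑ j ∈ Finset.range ℓ, ∑ y : Fin c, F (⟨(a.val + j) % q, Nat.mod_lt _ hq⟩, y) := by
  rw [cliqueBlock, Finset.sum_biUnion]
  · refine Finset.sum_congr rfl fun j hj => ?_
    rw [clique, Finset.sum_filter]
    calc (∑ x : Fin q × Fin c,
            if x.1 = (⟨(a.val + j) % q, Nat.mod_lt _ hq⟩ : Fin q) then F x else 0)
        = ∑ x : Fin q, ∑ y : Fin c,
            (if x = (⟨(a.val + j) % q, Nat.mod_lt _ hq⟩ : Fin q) then F (x, y) else 0) :=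
          Fintype.sum_prod_type _
      _ = ∑ x : Fin q,
            (if x = (⟨(a.val + j) % q, Nat.mod_lt _ hq⟩ : Fin q) then
              ∑ y : Fin c, F (x, y) else 0) :=
          Finset.sum_congr rfl fun x _ => by split <;> simp
      _ = ∑ y : Fin c, F (⟨(a.val + j) % q, Nat.mod_lt _ hq⟩, y) := by
          rw [Finset.sum_ite_eq' Finset.univ]; simp
  · intro s hs t ht hst
    simp only [Finset.coe_range, Set.mem_Iio] at hs ht
    simp only [Function.onFun]
    refine Finset.disjoint_left.2 fun x hx1 hx2 => ?_
    simp only [clique, Finset.mem_filter] at hx1 hx2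
    have := hx1.2.symm.trans hx2.2
    exact hst (mod_inj (lt_of_lt_of_le hs hℓ) (lt_of_lt_of_le ht hℓ)
      (congrArg Fin.val this))


section Chunk2

lemma unroll1 {q : ℕ} (hq : 0 < q) (r u : ℕ) (hu : u < q) :
    ((r + u) % q + (q - r % q)) % q = u := by
  have ha : r % q < q := Nat.mod_lt _ hq
  have hdm := Nat.div_add_mod r q
  have h1 : r + u + (q - r % q) = q * (r / q) + (u + q) := by omega
  rw [Nat.mod_add_mod, h1, Nat.mul_add_mod, Nat.add_mod_right, Nat.mod_eq_of_lt hu]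

lemma unroll2 {q : ℕ} (hq : 0 < q) (r x : ℕ) (hx : x < q) :
    (r + (x + (q - r % q)) % q) % q = x := by
  have ha : r % q < q := Nat.mod_lt _ hq
  have hdm := Nat.div_add_mod r q
  have h1 : r + (x + (q - r % q)) = q * (r / q) + (x + q) := by omega
  rw [Nat.add_mod_mod, h1, Nat.mul_add_mod, Nat.add_mod_right, Nat.mod_eq_of_lt hx]

variable {q c k : ℕ} {r : ℕ} {b : Fin k → ℕ}

/-- partial sums of block sizes -/
def psum (b : Fin k → ℕ) (i : Fin k) : ℕ :=
  ∑ j ∈ Finset.univ.filter (fun j => j < i), b j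

lemma psum_add_le (hsum : ∑ i, b i = q) (i : Fin k) : psum b i + b i ≤ q := by
  have h2 : psum b i + b i = ∑ j ∈ insert i (Finset.univ.filter (fun j => j < i)), b j := by
    rw [Finset.sum_insert (by simp), psum]; omega
  rw [← hsum, h2]
  exact Finset.sum_le_sum_of_subset (Finset.subset_univ _)

lemma psum_mono_add {i i' : Fin k} (h : i < i') : psum b i + b i ≤ psum b i' := by
  have hsub : insert i (Finset.univ.filter (fun j => j < i)) ⊆
      Finset.univ.filter (fun j => j < i') := by
    intro j hj
    rcases Finset.mem_insert.1 hj with rfl | hj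
    · simp [h]
    · simp only [Finset.mem_filter, Finset.mem_univ, true_and] at hj ⊢
      exact lt_trans hj h
  have h2 : psum b i + b i = ∑ j ∈ insert i (Finset.univ.filter (fun j => j < i)), b j := by
    rw [Finset.sum_insert (by simp), psum]; omega
  rw [h2, psum]
  exact Finset.sum_le_sum_of_subset hsub

lemma psum_cover (hsum : ∑ i, b i = q) {u : ℕ} (hu : u < q) :
    ∃ i, psum b i ≤ u ∧ u < psum b i + b i := by
  have hk : 0 < k := by
    rcases Nat.eq_zero_or_pos k with rfl | hk
    · simp at hsum; omega
    · exact hk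
  set T := Finset.univ.filter (fun i : Fin k => psum b i ≤ u) with hT
  have hS0 : psum b ⟨0, hk⟩ = 0 := by
    rw [psum]
    have : Finset.univ.filter (fun j : Fin k => j < ⟨0, hk⟩) = ∅ := by
      ext j; simp [Fin.lt_def]
    rw [this, Finset.sum_empty]
  have hTne : T.Nonempty := ⟨⟨0, hk⟩, Finset.mem_filter.2 ⟨Finset.mem_univ _, by omega⟩⟩
  set i := T.max' hTne with hi
  have himem : psum b i ≤ u := (Finset.mem_filter.1 (T.max'_mem hTne)).2
  refine ⟨i, himem, ?_⟩
  by_contra hcon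
  push_neg at hcon
  rcases Nat.lt_or_ge (i.val + 1) k with hlt | hge
  · set i' : Fin k := ⟨i.val + 1, hlt⟩ with hi'
    have hfe : Finset.univ.filter (fun j : Fin k => j < i') =
        insert i (Finset.univ.filter (fun j : Fin k => j < i)) := by
      ext j
      simp only [Finset.mem_filter, Finset.mem_univ, true_and, Finset.mem_insert]
      constructor
      · intro hj
        rcases Nat.lt_or_ge j.val i.val with h1 | h1
        · exact Or.inr (by exact h1)
        · exact Or.inl (Fin.ext (by simp only [hi', Fin.lt_def, Fin.val_mk] at hj; omega))
      · rintro (rfl | hj)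
        · simp only [hi', Fin.lt_def, Fin.val_mk]; omega
        · simp only [hi', Fin.lt_def, Fin.val_mk] at hj ⊢; omega
    have hsucc : psum b i' = psum b i + b i := by
      rw [psum, hfe, Finset.sum_insert (by simp), psum]; omega
    have hmem : i' ∈ T := Finset.mem_filter.2 ⟨Finset.mem_univ _, by omega⟩
    have := Finset.le_max' T i' hmem
    rw [← hi] at this
    simp only [Fin.le_def, hi'] at this
    omega
  · have huniv : insert i (Finset.univ.filter (fun j : Fin k => j < i)) = Finset.univ := by
      ext j
      simp only [Finset.mem_insert, Finset.mem_filter, Finset.mem_univ, true_and, iff_true]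
      rcases Nat.lt_or_ge j.val i.val with h1 | h1
      · exact Or.inr h1
      · exact Or.inl (Fin.ext (by omega))
    have : psum b i + b i = q := by
      rw [← hsum, ← huniv, Finset.sum_insert (by simp), psum]; omega
    omega

lemma mem_block_iff (hq : 0 < q) (hsum : ∑ i, b i = q) (i : Fin k)
    {x : Fin q × Fin c} :
    x ∈ cliqueBlock q c ⟨(r + psum b i) % q, Nat.mod_lt _ hq⟩ (b i) ↔
      psum b i ≤ (x.1.val + (q - r % q)) % q ∧
        (x.1.val + (q - r % q)) % q < psum b i + b i := by
  have hle := psum_add_le hsum i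
  rw [mem_cliqueBlock]
  constructor
  · rintro ⟨j, hj, hx⟩
    have hx' : x.1.val = (r + (psum b i + j)) % q := by
      rw [hx, Nat.mod_add_mod, Nat.add_assoc]
    have : (x.1.val + (q - r % q)) % q = psum b i + j := by
      rw [hx']; exact unroll1 hq r (psum b i + j) (by omega)
    omega
  · rintro ⟨h1, h2⟩
    refine ⟨(x.1.val + (q - r % q)) % q - psum b i, by omega, ?_⟩
    have h3 : psum b i + ((x.1.val + (q - r % q)) % q - psum b i) =
        (x.1.val + (q - r % q)) % q := by omega
    rw [Nat.mod_add_mod, Nat.add_assoc, h3]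
    exact (unroll2 hq r x.1.val x.1.isLt).symm

end Chunk2

section Chunk3

variable {q c k : ℕ} {r : ℕ} {b : Fin k → ℕ}

/-- the `i`-th block of the partition -/
def tblock (q c : ℕ) (hq : 0 < q) (r : ℕ) (b : Fin k → ℕ) (i : Fin k) :
    Finset (Fin q × Fin c) :=
  cliqueBlock q c ⟨(r + psum b i) % q, Nat.mod_lt _ hq⟩ (b i)

lemma blockParts_eq (hq : 0 < q) :
    blockParts q c hq r b = Finset.univ.image (tblock q c hq r b) := rfl

lemma mem_tblock_iff (hq : 0 < q) (hsum : ∑ i, b i = q) (i : Fin k)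
    {x : Fin q × Fin c} :
    x ∈ tblock q c hq r b i ↔
      psum b i ≤ (x.1.val + (q - r % q)) % q ∧
        (x.1.val + (q - r % q)) % q < psum b i + b i :=
  mem_block_iff hq hsum i

lemma tblock_disjoint (hq : 0 < q) (hsum : ∑ i, b i = q) {i i' : Fin k}
    (h : i ≠ i') : Disjoint (tblock q c hq r b i) (tblock q c hq r b i') := by
  refine Finset.disjoint_left.2 fun x hx hx' => ?_
  rw [mem_tblock_iff hq hsum] at hx hx'
  rcases lt_or_gt_of_ne h with hlt | hlt
  · have := psum_mono_add (b := b) hlt; omega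
  · have := psum_mono_add (b := b) hlt; omega

lemma tblock_nonempty (hq : 0 < q) (hc : 0 < c) (hb : ∀ i, 1 ≤ b i) (i : Fin k) :
    (tblock q c hq r b i).Nonempty := by
  refine ⟨(⟨(r + psum b i) % q, Nat.mod_lt _ hq⟩, ⟨0, hc⟩), ?_⟩
  rw [tblock, mem_cliqueBlock]
  exact ⟨0, hb i, by simp [Nat.mod_eq_of_lt (Nat.mod_lt _ hq)]⟩

lemma tblock_inj (hq : 0 < q) (hc : 0 < c) (hb : ∀ i, 1 ≤ b i)
    (hsum : ∑ i, b i = q) {i i' : Fin k}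
    (h : tblock q c hq r b i = tblock q c hq r b i') : i = i' := by
  by_contra hne
  obtain ⟨x, hx⟩ := tblock_nonempty (r := r) hq hc hb i
  exact Finset.disjoint_left.1 (tblock_disjoint hq hsum hne) hx (h ▸ hx)

lemma tblock_cover (hq : 0 < q) (hsum : ∑ i, b i = q) (x : Fin q × Fin c) :
    ∃ i, x ∈ tblock q c hq r b i := by
  obtain ⟨i, h1, h2⟩ := psum_cover hsum (Nat.mod_lt (x.1.val + (q - r % q)) hq)
  exact ⟨i, (mem_tblock_iff hq hsum i).2 ⟨h1, h2⟩⟩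

/-- the block partition as a `Finpartition` -/
def blockFinpartition (hq : 0 < q) (hc : 0 < c) (hb : ∀ i, 1 ≤ b i)
    (hsum : ∑ i, b i = q) (r : ℕ) :
    Finpartition (Finset.univ : Finset (Fin q × Fin c)) where
  parts := blockParts q c hq r b
  supIndep := by
    rw [Finset.supIndep_iff_pairwiseDisjoint]
    intro t ht t' ht' hne
    rw [Finset.mem_coe, blockParts_eq, Finset.mem_image] at ht ht'
    obtain ⟨i, -, rfl⟩ := ht
    obtain ⟨i', -, rfl⟩ := ht'
    exact tblock_disjoint hq hsum fun h => hne (by rw [h])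
  sup_parts := by
    ext x
    simp only [Finset.mem_univ, iff_true, Finset.mem_sup, id_eq]
    obtain ⟨i, hi⟩ := tblock_cover (r := r) hq hsum x
    exact ⟨tblock q c hq r b i, by
      rw [blockParts_eq]; exact Finset.mem_image_of_mem _ (Finset.mem_univ i), hi⟩
  bot_notMem := by
    rw [Finset.bot_eq_empty, blockParts_eq]
    intro h
    obtain ⟨i, -, hi⟩ := Finset.mem_image.1 h
    obtain ⟨x, hx⟩ := tblock_nonempty (r := r) hq hc hb i
    rw [hi] at hx
    exact absurd hx (Finset.notMem_empty x)

lemma blockFinpartition_parts (hq : 0 < q) (hc : 0 < c) (hb : ∀ i, 1 ≤ b i)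
    (hsum : ∑ i, b i = q) (r : ℕ) :
    (blockFinpartition hq hc hb hsum r).parts = blockParts q c hq r b := rfl

end Chunk3

section Chunk4

lemma indmul (P Q : Prop) [Decidable P] [Decidable Q] :
    (if P then (1 : ℕ) else 0) * (if Q then 1 else 0) = if P ∧ Q then 1 else 0 := by
  by_cases hP : P <;> by_cases hQ : Q <;> simp [hP, hQ]

lemma indor (P Q : Prop) [Decidable P] [Decidable Q] (h : ¬(P ∧ Q)) :
    (if P ∨ Q then (1 : ℕ) else 0) = (if P then 1 else 0) + (if Q then 1 else 0) := by
  by_cases hP : P <;> by_cases hQ : Q <;> simp [hP, hQ]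
  exact h ⟨hP, hQ⟩

lemma sum4 {A B : Type*} (s : Finset A) (t : Finset B) (f : A → A → ℕ) (g : B → B → ℕ) :
    (∑ j ∈ s, ∑ y ∈ t, ∑ j' ∈ s, ∑ y' ∈ t, f j j' * g y y') =
      (∑ j ∈ s, ∑ j' ∈ s, f j j') * (∑ y ∈ t, ∑ y' ∈ t, g y y') := by
  calc (∑ j ∈ s, ∑ y ∈ t, ∑ j' ∈ s, ∑ y' ∈ t, f j j' * g y y')
      = ∑ j ∈ s, ∑ j' ∈ s, ∑ y ∈ t, ∑ y' ∈ t, f j j' * g y y' :=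
        Finset.sum_congr rfl fun j _ => Finset.sum_comm
    _ = _ := by simp_rw [← Finset.mul_sum, ← Finset.sum_mul]

lemma count_ne {c : ℕ} (y : Fin c) :
    (∑ y' : Fin c, if y ≠ y' then (1 : ℕ) else 0) = c - 1 := by
  have h1 : (∑ y' : Fin c, if y = y' then (1 : ℕ) else 0) = 1 := by
    simp [Finset.sum_ite_eq]
  have h2 : (∑ y' : Fin c,
      ((if y = y' then (1 : ℕ) else 0) + (if y ≠ y' then 1 else 0))) = c := by
    have hterm : ∀ y' : Fin c,
        ((if y = y' then (1 : ℕ) else 0) + (if y ≠ y' then 1 else 0)) = 1 := fun y' => by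
      by_cases h : y = y' <;> simp [h]
    simp_rw [hterm]; simp
  rw [Finset.sum_add_distrib, h1] at h2
  omega

lemma count_zero {c : ℕ} (hc : 0 < c) :
    (∑ y : Fin c, if y.val = 0 then (1 : ℕ) else 0) = 1 := by
  have h : ∀ y : Fin c, (y.val = 0) = (y = ⟨0, hc⟩) := by
    intro y; simp [Fin.ext_iff]
  simp_rw [h]
  simp [Finset.sum_ite_eq']

lemma cyc_shift {q a : ℕ} {ℓ j j' : ℕ} (hℓ : ℓ ≤ q - 1) (hj : j < ℓ) (hj' : j' < ℓ) :
    Cyc q ((a + j) % q) ((a + j') % q) ↔ (j' = j + 1 ∨ j = j' + 1) := by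
  have e1 : ((a + j) % q + 1) % q = (a + (j + 1)) % q := by
    rw [Nat.mod_add_mod, Nat.add_assoc]
  have e2 : ((a + j') % q + 1) % q = (a + (j' + 1)) % q := by
    rw [Nat.mod_add_mod, Nat.add_assoc]
  rw [Cyc, e1, e2]
  constructor
  · rintro (h | h)
    · exact Or.inl (mod_inj (by omega) (by omega) h)
    · exact Or.inr (mod_inj (by omega) (by omega) h)
  · rintro (rfl | rfl)
    · exact Or.inl rfl
    · exact Or.inr rfl

lemma mk_shift_eq {q : ℕ} (hq0 : 0 < q) {a : Fin q} {ℓ j j' : ℕ}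
    (hℓ : ℓ ≤ q) (hj : j < ℓ) (hj' : j' < ℓ) :
    ((⟨(a.val + j) % q, Nat.mod_lt _ hq0⟩ : Fin q) =
      ⟨(a.val + j') % q, Nat.mod_lt _ hq0⟩) ↔ j = j' := by
  rw [Fin.mk.injEq]
  exact ⟨fun h => mod_inj (by omega) (by omega) h, fun h => by rw [h]⟩

lemma ind_point {q c : ℕ} (hq : 2 ≤ q) (hq0 : 0 < q) (a : Fin q) {ℓ j j' : ℕ}
    (hℓ : ℓ ≤ q - 1) (hj : j < ℓ) (hj' : j' < ℓ) (y y' : Fin c) :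
    (if (ringOfCliques q c).Adj
        (⟨(a.val + j) % q, Nat.mod_lt _ hq0⟩, y)
        (⟨(a.val + j') % q, Nat.mod_lt _ hq0⟩, y') then (1 : ℕ) else 0) =
      (if j = j' then 1 else 0) * (if y ≠ y' then 1 else 0) +
      (if (j' = j + 1 ∨ j = j' + 1) then 1 else 0) *
        ((if y.val = 0 then 1 else 0) * (if y'.val = 0 then 1 else 0)) := by
  rw [adj_ind hq, indmul, indmul, indmul]
  congr 1
  · exact if_congr (and_congr_left fun _ => mk_shift_eq hq0 (by omega) hj hj') rfl rfl
  · refine if_congr ?_ rfl rfl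
    rw [cyc_shift hℓ hj hj']
    tauto

lemma range_pair_count {ℓ : ℕ} :
    (∑ j ∈ Finset.range ℓ, ∑ j' ∈ Finset.range ℓ,
      if (j' = j + 1 ∨ j = j' + 1) then (1 : ℕ) else 0) = 2 * (ℓ - 1) := by
  have hsplit : ∀ j j' : ℕ, (if (j' = j + 1 ∨ j = j' + 1) then (1 : ℕ) else 0) =
      (if j' = j + 1 then 1 else 0) + (if j = j' + 1 then 1 else 0) := by
    intro j j'; exact indor _ _ (by omega)
  have key : ∀ a : ℕ, (∑ j ∈ Finset.range ℓ, ∑ j' ∈ Finset.range ℓ,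
      if j' = j + 1 then (1 : ℕ) else 0) = ℓ - 1 := by
    intro a
    have h1 : ∀ j, (∑ j' ∈ Finset.range ℓ, if j' = j + 1 then (1 : ℕ) else 0) =
        if j + 1 ∈ Finset.range ℓ then 1 else 0 := fun j =>
      Finset.sum_ite_eq' (Finset.range ℓ) (j + 1) (fun _ => 1)
    simp_rw [h1, Finset.mem_range]
    rw [← Finset.card_filter]
    have h2 : (Finset.range ℓ).filter (fun j => j + 1 < ℓ) = Finset.range (ℓ - 1) := by
      ext x; simp only [Finset.mem_filter, Finset.mem_range]; omega
    rw [h2, Finset.card_range]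
  simp_rw [hsplit, Finset.sum_add_distrib]
  rw [key 0]
  have h3 : (∑ j ∈ Finset.range ℓ, ∑ j' ∈ Finset.range ℓ,
      if j = j' + 1 then (1 : ℕ) else 0) = ℓ - 1 := by
    rw [Finset.sum_comm]; exact key 0
  rw [h3]; omega

lemma count_adj_block {q c : ℕ} (hq : 2 ≤ q) (hq0 : 0 < q) (hc : 0 < c) (a : Fin q)
    {ℓ : ℕ} (hℓ : ℓ ≤ q - 1) :
    (∑ u ∈ cliqueBlock q c a ℓ, ∑ v ∈ cliqueBlock q c a ℓ,
      if (ringOfCliques q c).Adj u v then (1 : ℕ) else 0) =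
      ℓ * (c * (c - 1)) + 2 * (ℓ - 1) := by
  rw [sum_cliqueBlock hq0 a (by omega)]
  refine Eq.trans (Finset.sum_congr rfl fun j hj => Finset.sum_congr rfl fun y _ =>
    sum_cliqueBlock hq0 a (by omega) _) ?_
  refine Eq.trans (Finset.sum_congr rfl fun j hj => Finset.sum_congr rfl fun y _ =>
    Finset.sum_congr rfl fun j' hj' => Finset.sum_congr rfl fun y' _ =>
      ind_point hq hq0 a hℓ (Finset.mem_range.1 hj) (Finset.mem_range.1 hj') y y') ?_
  simp_rw [Finset.sum_add_distrib]
  rw [sum4 (Finset.range ℓ) (Finset.univ : Finset (Fin c)) (fun j j' => if j = j' then 1 else 0)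
    (fun y y' => if y ≠ y' then 1 else 0)]
  rw [sum4 (Finset.range ℓ) (Finset.univ : Finset (Fin c)) (fun j j' => if (j' = j + 1 ∨ j = j' + 1) then 1 else 0)
    (fun y y' => (if y.val = 0 then 1 else 0) * (if y'.val = 0 then 1 else 0))]
  have hS1 : (∑ j ∈ Finset.range ℓ, ∑ j' ∈ Finset.range ℓ,
      if j = j' then (1 : ℕ) else 0) = ℓ := by
    calc _ = ∑ _j ∈ Finset.range ℓ, (1 : ℕ) :=
          Finset.sum_congr rfl fun j hj => by rw [Finset.sum_ite_eq, if_pos hj]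
      _ = ℓ := by simp
  have hS2 : (∑ y : Fin c, ∑ y' : Fin c, if y ≠ y' then (1 : ℕ) else 0) = c * (c - 1) := by
    simp_rw [count_ne]
    simp [mul_comm]
  have hS4 : (∑ y : Fin c, ∑ y' : Fin c,
      (if y.val = 0 then (1 : ℕ) else 0) * (if y'.val = 0 then 1 else 0)) = 1 := by
    simp_rw [← Finset.mul_sum, count_zero hc, mul_one]
    exact count_zero hc
  rw [hS1, hS2, hS4, range_pair_count, mul_one]

end Chunk4
section Chunk5

lemma cyc_count {q : ℕ} (hq : 2 ≤ q) (i : Fin q) :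
    (∑ i' : Fin q, if Cyc q i.val i'.val then (1 : ℕ) else 0) =
      if q = 2 then 1 else 2 := by
  have hq0 : 0 < q := by omega
  set f1 : Fin q := ⟨(i.val + 1) % q, Nat.mod_lt _ hq0⟩ with hf1
  set f2 : Fin q := ⟨(i.val + (q - 1)) % q, Nat.mod_lt _ hq0⟩ with hf2
  have hiff : ∀ i' : Fin q, Cyc q i.val i'.val ↔ (i' = f1 ∨ i' = f2) := by
    intro i'
    rw [Cyc]
    constructor
    · rintro (h | h)
      · exact Or.inl (Fin.ext h)
      · refine Or.inr (Fin.ext ?_)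
        show i'.val = (i.val + (q - 1)) % q
        rw [h, Nat.mod_add_mod]
        have e : i'.val + 1 + (q - 1) = i'.val + q := by omega
        rw [e, Nat.add_mod_right, Nat.mod_eq_of_lt i'.isLt]
    · rintro (rfl | rfl)
      · exact Or.inl rfl
      · refine Or.inr ?_
        show i.val = ((i.val + (q - 1)) % q + 1) % q
        rw [Nat.mod_add_mod]
        have e : i.val + (q - 1) + 1 = i.val + q := by omega
        rw [e, Nat.add_mod_right, Nat.mod_eq_of_lt i.isLt]
  simp_rw [hiff]
  by_cases h2 : q = 2
  · have hf12 : f1 = f2 := by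
      apply Fin.ext
      show (i.val + 1) % q = (i.val + (q - 1)) % q
      congr 1
      omega
    rw [if_pos h2]
    simp_rw [hf12, or_self]
    rw [Finset.sum_ite_eq' Finset.univ]
    simp
  · have hne : f1 ≠ f2 := by
      intro h
      have := mod_inj (a := i.val) (by omega) (by omega) (congrArg Fin.val h)
      omega
    have hsplit : ∀ i' : Fin q, (if (i' = f1 ∨ i' = f2) then (1 : ℕ) else 0) =
        (if i' = f1 then 1 else 0) + (if i' = f2 then 1 else 0) := fun i' =>
      indor _ _ (fun h => hne (h.1 ▸ h.2 ▸ rfl))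
    simp_rw [hsplit, Finset.sum_add_distrib]
    rw [Finset.sum_ite_eq' Finset.univ, Finset.sum_ite_eq' Finset.univ, if_neg h2]
    simp

lemma deg_eq {q c : ℕ} (u : Fin q × Fin c) :
    deg (ringOfCliques q c) u =
      ∑ v : Fin q × Fin c, if (ringOfCliques q c).Adj u v then 1 else 0 := by
  have h1 : (ringOfCliques q c).neighborSet u =
      ↑(Finset.univ.filter ((ringOfCliques q c).Adj u)) := by
    ext v; simp [SimpleGraph.mem_neighborSet]
  rw [deg, h1, Set.ncard_coe_finset, Finset.card_filter]

lemma deg_point {q c : ℕ} (hq : 2 ≤ q) (hq0 : 0 < q) (hc : 0 < c) (a : Fin q)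
    (j : ℕ) (y : Fin c) :
    deg (ringOfCliques q c) (⟨(a.val + j) % q, Nat.mod_lt _ hq0⟩, y) =
      (c - 1) + (if y.val = 0 then (1 : ℕ) else 0) * (if q = 2 then 1 else 2) := by
  rw [deg_eq, Fintype.sum_prod_type]
  have hpt : ∀ (i' : Fin q) (y' : Fin c),
      (if (ringOfCliques q c).Adj (⟨(a.val + j) % q, Nat.mod_lt _ hq0⟩, y) (i', y')
        then (1 : ℕ) else 0) =
      (if (⟨(a.val + j) % q, Nat.mod_lt _ hq0⟩ : Fin q) = i' then 1 else 0) *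
        (if y ≠ y' then 1 else 0) +
      (if y.val = 0 then 1 else 0) * ((if y'.val = 0 then 1 else 0) *
        (if Cyc q ((a.val + j) % q) i'.val then 1 else 0)) := by
    intro i' y'
    rw [adj_ind hq, indmul, indmul, indmul]
  simp_rw [hpt, Finset.sum_add_distrib]
  have hA : (∑ i' : Fin q, ∑ y' : Fin c,
      (if (⟨(a.val + j) % q, Nat.mod_lt _ hq0⟩ : Fin q) = i' then (1 : ℕ) else 0) *
        (if y ≠ y' then 1 else 0)) = c - 1 := by
    simp_rw [← Finset.mul_sum, count_ne, ← Finset.sum_mul]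
    rw [Finset.sum_ite_eq Finset.univ]
    simp
  have hB : (∑ i' : Fin q, ∑ y' : Fin c,
      (if y.val = 0 then (1 : ℕ) else 0) * ((if y'.val = 0 then 1 else 0) *
        (if Cyc q ((a.val + j) % q) i'.val then 1 else 0))) =
      (if y.val = 0 then (1 : ℕ) else 0) * (if q = 2 then 1 else 2) := by
    simp_rw [← Finset.mul_sum, ← Finset.sum_mul, count_zero hc, one_mul]
    rw [cyc_count hq ⟨(a.val + j) % q, Nat.mod_lt _ hq0⟩]
  rw [hA, hB]

lemma deg_sum_block {q c : ℕ} (hq : 2 ≤ q) (hq0 : 0 < q) (hc : 0 < c) (a : Fin q)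
    {ℓ : ℕ} (hℓ : ℓ ≤ q) :
    (∑ u ∈ cliqueBlock q c a ℓ, deg (ringOfCliques q c) u) =
      ℓ * (c * (c - 1) + (if q = 2 then 1 else 2)) := by
  rw [sum_cliqueBlock hq0 a hℓ]
  simp_rw [deg_point hq hq0 hc a, Finset.sum_add_distrib]
  have h1 : (∑ _y : Fin c, (c - 1)) = c * (c - 1) := by simp [mul_comm]
  have h2 : (∑ y : Fin c, (if y.val = 0 then (1 : ℕ) else 0) * (if q = 2 then 1 else 2)) =
      (if q = 2 then 1 else 2) := by
    rw [← Finset.sum_mul, count_zero hc, one_mul]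
  simp_rw [h1, h2]
  simp [mul_comm]
  split_ifs <;> ring

lemma edgeCount_pos {q c : ℕ} (hq : 2 ≤ q) (hc : 2 ≤ c) :
    0 < edgeCount (ringOfCliques q c) := by
  rw [edgeCount, Set.ncard_pos (Set.toFinite _)]
  refine ⟨s(((⟨0, by omega⟩ : Fin q), (⟨0, by omega⟩ : Fin c)),
    ((⟨0, by omega⟩ : Fin q), (⟨1, by omega⟩ : Fin c))), ?_⟩
  rw [SimpleGraph.mem_edgeSet, adj_iff hq]
  exact Or.inl ⟨rfl, by simp [Fin.ext_iff]⟩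

end Chunk5


section Chunk6

lemma sum_ind_right {α : Type*} [Fintype α] [DecidableEq α] (s : Finset α) (g : α → ℝ) :
    (∑ x : α, g x * (if x ∈ s then (1 : ℝ) else 0)) = ∑ x ∈ s, g x := by
  simp_rw [mul_ite, mul_one, mul_zero]
  rw [Finset.sum_ite_mem, Finset.univ_inter]

set_option maxHeartbeats 1000000 in
lemma double_sum_parts {α : Type*} [Fintype α] [DecidableEq α] {k : ℕ}
    (t : Fin k → Finset α) (hdisj : ∀ i j : Fin k, i ≠ j → Disjoint (t i) (t j))
    (F : α → α → ℝ) (pts : Finset (Finset α)) (hpts : pts = Finset.univ.image t) :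
    (∑ u : α, ∑ v : α, F u v * (if ∃ s ∈ pts, u ∈ s ∧ v ∈ s then (1 : ℝ) else 0)) =
      ∑ i : Fin k, ∑ u ∈ t i, ∑ v ∈ t i, F u v := by
  have hdelta : ∀ u v : α,
      (if ∃ s ∈ pts, u ∈ s ∧ v ∈ s then (1 : ℝ) else 0) =
        ∑ i : Fin k, (if u ∈ t i then (1 : ℝ) else 0) * (if v ∈ t i then 1 else 0) := by
    intro u v
    by_cases hex : ∃ i : Fin k, u ∈ t i ∧ v ∈ t i
    · obtain ⟨i0, hu0, hv0⟩ := hex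
      rw [if_pos ⟨t i0, by rw [hpts]; exact Finset.mem_image_of_mem _ (Finset.mem_univ i0),
        hu0, hv0⟩]
      rw [Finset.sum_eq_single i0]
      · rw [if_pos hu0, if_pos hv0]; norm_num
      · intro i _ hne
        by_cases hu : u ∈ t i
        · exact absurd hu0 (Finset.disjoint_left.1 (hdisj i i0 hne) hu)
        · rw [if_neg hu, zero_mul]
      · intro h; exact absurd (Finset.mem_univ i0) h
    · rw [if_neg, eq_comm]
      · refine Finset.sum_eq_zero fun i _ => ?_
        by_cases hu : u ∈ t i
        · by_cases hv : v ∈ t i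
          · exact absurd ⟨i, hu, hv⟩ hex
          · rw [if_neg hv, mul_zero]
        · rw [if_neg hu, zero_mul]
      · rintro ⟨s, hs, hu, hv⟩
        rw [hpts] at hs
        obtain ⟨i, -, rfl⟩ := Finset.mem_image.1 hs
        exact hex ⟨i, hu, hv⟩
  simp_rw [hdelta, Finset.mul_sum, ← mul_assoc]
  refine Eq.trans (Finset.sum_congr rfl fun u _ => Finset.sum_comm) ?_
  refine Eq.trans Finset.sum_comm ?_
  refine Finset.sum_congr rfl fun i _ => ?_
  calc (∑ u : α, ∑ v : α, F u v * (if u ∈ t i then (1 : ℝ) else 0) *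
          (if v ∈ t i then (1 : ℝ) else 0))
      = ∑ u : α, (∑ v : α, (F u v) * (if v ∈ t i then (1 : ℝ) else 0)) *
          (if u ∈ t i then (1 : ℝ) else 0) := by
        refine Finset.sum_congr rfl fun u _ => ?_
        rw [Finset.sum_mul]
        exact Finset.sum_congr rfl fun v _ => by ring
    _ = ∑ u : α, (∑ v ∈ t i, F u v) * (if u ∈ t i then (1 : ℝ) else 0) := by
        simp_rw [sum_ind_right]
    _ = ∑ u ∈ t i, ∑ v ∈ t i, F u v := sum_ind_right _ _

lemma tblock_def {q c k : ℕ} (hq0 : 0 < q) (r : ℕ) (b : Fin k → ℕ) (i : Fin k) :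
    tblock q c hq0 r b i =
      cliqueBlock q c ⟨(r + psum b i) % q, Nat.mod_lt _ hq0⟩ (b i) := rfl

lemma blockParts_eq_image {q c k : ℕ} (hq0 : 0 < q) (r : ℕ) (b : Fin k → ℕ) :
    blockParts q c hq0 r b = Finset.univ.image (tblock q c hq0 r b) := rfl

lemma b_le_pred {q k : ℕ} (hk : 2 ≤ k) {b : Fin k → ℕ} (hb : ∀ i, 1 ≤ b i)
    (hsum : ∑ i, b i = q) (i : Fin k) : b i ≤ q - 1 := by
  set i' : Fin k := if i = ⟨0, by omega⟩ then ⟨1, by omega⟩ else ⟨0, by omega⟩ with hi'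
  have hne : i' ≠ i := by
    rw [hi']
    split_ifs with h
    · rw [h]; simp [Fin.ext_iff]
    · exact fun he => h he.symm
  have hpair : b i + b i' = ∑ j ∈ ({i, i'} : Finset (Fin k)), b j :=
    (Finset.sum_pair (fun h => hne h.symm)).symm
  have hle : (∑ j ∈ ({i, i'} : Finset (Fin k)), b j) ≤ ∑ j, b j :=
    Finset.sum_le_sum_of_subset (Finset.subset_univ _)
  have := hb i'
  omega


set_option maxHeartbeats 1000000 in
lemma Qmod_formula {q c k : ℕ} (hq : 2 ≤ q) (hc : 2 ≤ c) (hk : 2 ≤ k)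
    (r : ℕ) (b : Fin k → ℕ) (hb : ∀ i, 1 ≤ b i) (hsum : ∑ i, b i = q)
    (P : Finpartition (Finset.univ : Finset (Fin q × Fin c)))
    (hP : P.parts = blockParts q c (lt_of_lt_of_le two_pos hq) r b) :
    Qmod (ringOfCliques q c) P =
      (1 / (2 * (edgeCount (ringOfCliques q c) : ℝ))) *
        (((q * (c * (c - 1)) + 2 * q : ℕ) : ℝ) - 2 * (k : ℝ) -
          ((c * (c - 1) + if q = 2 then 1 else 2 : ℕ) : ℝ) ^ 2 * (∑ i, (b i : ℝ) ^ 2) /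
            (2 * (edgeCount (ringOfCliques q c) : ℝ))) := by
  have hq0 : 0 < q := by omega
  have hc0 : 0 < c := by omega
  have hbq : ∀ i, b i ≤ q - 1 := b_le_pred hk hb hsum
  have hPparts : P.parts = Finset.univ.image (tblock q c hq0 r b) := hP
  rw [Qmod]
  congr 1
  refine Eq.trans (double_sum_parts (tblock q c hq0 r b)
    (fun i j hne => tblock_disjoint hq0 hsum hne) _ P.parts hPparts) ?_
  have hE : ∀ i : Fin k,
      (∑ u ∈ tblock q c hq0 r b i, ∑ v ∈ tblock q c hq0 r b i,
        (if (ringOfCliques q c).Adj u v then (1 : ℝ) else 0)) =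
      (b i : ℝ) * ((c * (c - 1) : ℕ) : ℝ) + 2 * (b i : ℝ) - 2 := by
    intro i
    have h := count_adj_block (c := c) hq hq0 hc0
      ⟨(r + psum b i) % q, Nat.mod_lt _ hq0⟩ (hbq i)
    have hcast : ((∑ u ∈ tblock q c hq0 r b i, ∑ v ∈ tblock q c hq0 r b i,
        if (ringOfCliques q c).Adj u v then (1 : ℕ) else 0 : ℕ) : ℝ) =
        ∑ u ∈ tblock q c hq0 r b i, ∑ v ∈ tblock q c hq0 r b i,
          (if (ringOfCliques q c).Adj u v then (1 : ℝ) else 0) := by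
      push_cast
      rfl
    rw [← hcast, tblock_def, h]
    have h1 : (1 : ℕ) ≤ b i := hb i
    push_cast [Nat.cast_sub h1]
    ring
  have hD : ∀ i : Fin k,
      (∑ u ∈ tblock q c hq0 r b i, (deg (ringOfCliques q c) u : ℝ)) =
      (b i : ℝ) * ((c * (c - 1) + if q = 2 then 1 else 2 : ℕ) : ℝ) := by
    intro i
    have h := deg_sum_block (c := c) hq hq0 hc0
      ⟨(r + psum b i) % q, Nat.mod_lt _ hq0⟩ (le_trans (hbq i) (by omega))
    have hcast : ((∑ u ∈ tblock q c hq0 r b i, deg (ringOfCliques q c) u : ℕ) : ℝ) =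
        ∑ u ∈ tblock q c hq0 r b i, (deg (ringOfCliques q c) u : ℝ) := by push_cast; rfl
    rw [← hcast, tblock_def, h]
    push_cast
    split_ifs <;> push_cast <;> ring
  have hDD : ∀ i : Fin k,
      (∑ u ∈ tblock q c hq0 r b i, ∑ v ∈ tblock q c hq0 r b i,
        (deg (ringOfCliques q c) u : ℝ) * (deg (ringOfCliques q c) v : ℝ) /
          (2 * (edgeCount (ringOfCliques q c) : ℝ))) =
      (b i : ℝ) ^ 2 * ((c * (c - 1) + if q = 2 then 1 else 2 : ℕ) : ℝ) ^ 2 /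
        (2 * (edgeCount (ringOfCliques q c) : ℝ)) := by
    intro i
    simp_rw [← Finset.sum_div]
    rw [← Finset.sum_mul_sum, hD i]
    ring
  calc (∑ i : Fin k, ∑ u ∈ tblock q c hq0 r b i, ∑ v ∈ tblock q c hq0 r b i,
        ((if (ringOfCliques q c).Adj u v then (1 : ℝ) else 0) -
          (deg (ringOfCliques q c) u : ℝ) * (deg (ringOfCliques q c) v : ℝ) /
            (2 * (edgeCount (ringOfCliques q c) : ℝ))))
      = ∑ i : Fin k,
          (((b i : ℝ) * ((c * (c - 1) : ℕ) : ℝ) + 2 * (b i : ℝ) - 2) -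
            (b i : ℝ) ^ 2 * ((c * (c - 1) + if q = 2 then 1 else 2 : ℕ) : ℝ) ^ 2 /
              (2 * (edgeCount (ringOfCliques q c) : ℝ))) := by
        refine Finset.sum_congr rfl fun i _ => ?_
        rw [← hE i, ← hDD i, ← Finset.sum_sub_distrib]
        exact Finset.sum_congr rfl fun u _ => Finset.sum_sub_distrib _ _
    _ = _ := by
        rw [Finset.sum_sub_distrib, Finset.sum_sub_distrib, Finset.sum_add_distrib]
        have hbsum : (∑ i : Fin k, (b i : ℝ)) = (q : ℝ) := by
          rw [← Nat.cast_sum, hsum]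
        have h2 : (∑ _i : Fin k, (2 : ℝ)) = 2 * (k : ℝ) := by
          simp [Finset.card_univ, mul_comm]
        have h3 : (∑ i : Fin k, (b i : ℝ) * ((c * (c - 1) : ℕ) : ℝ)) =
            (q : ℝ) * ((c * (c - 1) : ℕ) : ℝ) := by
          rw [← Finset.sum_mul, hbsum]
        have h4 : (∑ i : Fin k, 2 * (b i : ℝ)) = 2 * (q : ℝ) := by
          rw [← Finset.mul_sum, hbsum]
        have h5 : (∑ i : Fin k,
            (b i : ℝ) ^ 2 * ((c * (c - 1) + if q = 2 then 1 else 2 : ℕ) : ℝ) ^ 2 /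
              (2 * (edgeCount (ringOfCliques q c) : ℝ))) =
            ((c * (c - 1) + if q = 2 then 1 else 2 : ℕ) : ℝ) ^ 2 * (∑ i, (b i : ℝ) ^ 2) /
              (2 * (edgeCount (ringOfCliques q c) : ℝ)) := by
          rw [← Finset.sum_div]
          congr 1
          rw [Finset.mul_sum]
          exact Finset.sum_congr rfl fun i _ => by ring
        rw [h2, h3, h4, h5]
        push_cast
        ring





end Chunk6

lemma exists_balanced (q k : ℕ) (hk : 0 < k) (hkq : k ≤ q) :
    ∃ b : Fin k → ℕ, (∀ i, 1 ≤ b i) ∧ (∑ i, b i) = q ∧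
      (∀ i, b i = q / k ∨ b i = q / k + 1) := by
  refine ⟨fun i => q / k + if i.val < q % k then 1 else 0, fun i => ?_, ?_, fun i => ?_⟩
  · show 1 ≤ q / k + if i.val < q % k then 1 else 0
    have : 1 ≤ q / k := (Nat.one_le_div_iff hk).2 hkq
    split_ifs <;> omega
  · rw [Finset.sum_add_distrib, Finset.sum_const, Finset.card_univ, Fintype.card_fin,
      smul_eq_mul]
    have h1 : (∑ i : Fin k, if i.val < q % k then 1 else 0) = q % k := by
      rw [Fin.sum_univ_eq_sum_range (fun j => if j < q % k then 1 else 0), ← Finset.card_filter]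
      have h2 : (Finset.range k).filter (fun j => j < q % k) = Finset.range (q % k) := by
        ext x
        simp only [Finset.mem_filter, Finset.mem_range]
        have := Nat.mod_lt q hk
        omega
      rw [h2, Finset.card_range]
    rw [h1, Nat.div_add_mod]
  · show (q / k + if i.val < q % k then 1 else 0) = q / k ∨
      (q / k + if i.val < q % k then 1 else 0) = q / k + 1
    split_ifs <;> omega

lemma balanced_min {q k : ℕ} (hk : 0 < k) {b b' : Fin k → ℕ}
    (hbal : ∀ i, b i = q / k ∨ b i = q / k + 1)
    (hsum : (∑ i, b i) = q) (hsum' : (∑ i, b' i) = q) :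
    (∑ i, (b i) ^ 2) ≤ ∑ i, (b' i) ^ 2 := by
  set M : ℤ := ((q / k : ℕ) : ℤ) with hM
  have key : ∀ x : ℤ, (2 * M + 1) * x - M ^ 2 - M ≤ x ^ 2 := by
    intro x
    rcases le_or_gt x M with h | h
    · nlinarith
    · nlinarith
  have keyeq : ∀ i : Fin k, ((b i : ℤ)) ^ 2 = (2 * M + 1) * (b i : ℤ) - M ^ 2 - M := by
    intro i
    rcases hbal i with h | h
    · rw [h, ← hM]; ring
    · rw [h, Nat.cast_add, Nat.cast_one, ← hM]; ring
  have hsZ : (∑ i : Fin k, (b i : ℤ)) = (q : ℤ) := by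
    rw [← Nat.cast_sum, hsum]
  have hsZ' : (∑ i : Fin k, (b' i : ℤ)) = (q : ℤ) := by
    rw [← Nat.cast_sum, hsum']
  have hL : (∑ i : Fin k, ((b i : ℤ)) ^ 2) =
      (2 * M + 1) * (q : ℤ) - (k : ℤ) * (M ^ 2 + M) := by
    calc (∑ i : Fin k, ((b i : ℤ)) ^ 2)
        = ∑ i : Fin k, ((2 * M + 1) * (b i : ℤ) - M ^ 2 - M) :=
          Finset.sum_congr rfl fun i _ => keyeq i
      _ = (2 * M + 1) * (q : ℤ) - (k : ℤ) * (M ^ 2 + M) := by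
          rw [Finset.sum_sub_distrib, Finset.sum_sub_distrib, ← Finset.mul_sum, hsZ]
          simp [Finset.card_univ, mul_comm]
          ring
  have hR : (2 * M + 1) * (q : ℤ) - (k : ℤ) * (M ^ 2 + M) ≤
      ∑ i : Fin k, ((b' i : ℤ)) ^ 2 := by
    calc (2 * M + 1) * (q : ℤ) - (k : ℤ) * (M ^ 2 + M)
        = ∑ i : Fin k, ((2 * M + 1) * (b' i : ℤ) - M ^ 2 - M) := by
          rw [Finset.sum_sub_distrib, Finset.sum_sub_distrib, ← Finset.mul_sum, hsZ']
          simp [Finset.card_univ, mul_comm]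
          ring
      _ ≤ ∑ i : Fin k, ((b' i : ℤ)) ^ 2 := Finset.sum_le_sum fun i _ => key _
  have : (∑ i : Fin k, ((b i : ℤ)) ^ 2) ≤ ∑ i : Fin k, ((b' i : ℤ)) ^ 2 := by
    rw [hL]; exact hR
  have hcast : ∀ f : Fin k → ℕ, ((∑ i, (f i) ^ 2 : ℕ) : ℤ) = ∑ i : Fin k, ((f i : ℤ)) ^ 2 := by
    intro f; push_cast; rfl
  rw [← Nat.cast_le (α := ℤ), hcast, hcast]
  exact this

lemma sum_split_two {k : ℕ} (f : Fin k → ℕ) {i j : Fin k} (hne : i ≠ j) :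
    (∑ x, f x) = f i + f j + ∑ x ∈ (Finset.univ.erase i).erase j, f x := by
  rw [← Finset.add_sum_erase _ f (Finset.mem_univ i),
    ← Finset.add_sum_erase _ f (Finset.mem_erase.2 ⟨hne.symm, Finset.mem_univ j⟩),
    ← add_assoc]

lemma min_balanced {q k : ℕ} (hk : 2 ≤ k) {b : Fin k → ℕ}
    (hb : ∀ i, 1 ≤ b i) (hsum : (∑ i, b i) = q)
    (hmin : ∀ b' : Fin k → ℕ, (∀ i, 1 ≤ b' i) → (∑ i, b' i) = q →
      (∑ i, (b i) ^ 2) ≤ ∑ i, (b' i) ^ 2) :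
    ∀ i, b i = q / k ∨ b i = q / k + 1 := by
  have hk0 : 0 < k := by omega
  -- step 1: all values within 1 of each other
  have hstep : ∀ i j : Fin k, b i ≤ b j + 1 := by
    intro i j
    by_contra hcon
    push_neg at hcon
    have hne : i ≠ j := by intro h; rw [h] at hcon; omega
    set b'' : Fin k → ℕ := fun x => if x = i then b i - 1 else if x = j then b j + 1 else b x
      with hb''
    have h1 : ∀ x, 1 ≤ b'' x := by
      intro x
      show 1 ≤ if x = i then b i - 1 else if x = j then b j + 1 else b x
      have := hb j
      have := hb x
      split_ifs <;> omega
    have hrest : ∀ x ∈ (Finset.univ.erase i).erase j, b'' x = b x := by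
      intro x hx
      rw [Finset.mem_erase, Finset.mem_erase] at hx
      show (if x = i then b i - 1 else if x = j then b j + 1 else b x) = b x
      rw [if_neg hx.2.1, if_neg hx.1]
    have hrestsq : ∀ x ∈ (Finset.univ.erase i).erase j, (b'' x) ^ 2 = (b x) ^ 2 := by
      intro x hx; rw [hrest x hx]
    have hii : b'' i = b i - 1 := by
      show (if i = i then b i - 1 else if i = j then b j + 1 else b i) = b i - 1
      rw [if_pos rfl]
    have hjj : b'' j = b j + 1 := by
      show (if j = i then b i - 1 else if j = j then b j + 1 else b j) = b j + 1
      rw [if_neg hne.symm, if_pos rfl]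
    have h2 : (∑ x, b'' x) = q := by
      have e1 := sum_split_two b'' hne
      have e2 := sum_split_two b hne
      have e3 : (∑ x ∈ (Finset.univ.erase i).erase j, b'' x) =
          ∑ x ∈ (Finset.univ.erase i).erase j, b x :=
        Finset.sum_congr rfl hrest
      have := hb j
      have := hb i
      omega
    have h3 : (∑ x, (b'' x) ^ 2) < ∑ x, (b x) ^ 2 := by
      have e1 : (∑ x, (b'' x) ^ 2) = (b'' i) ^ 2 + (b'' j) ^ 2 +
          ∑ x ∈ (Finset.univ.erase i).erase j, (b'' x) ^ 2 :=
        sum_split_two (fun x => (b'' x) ^ 2) hne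
      have e2 : (∑ x, (b x) ^ 2) = (b i) ^ 2 + (b j) ^ 2 +
          ∑ x ∈ (Finset.univ.erase i).erase j, (b x) ^ 2 :=
        sum_split_two (fun x => (b x) ^ 2) hne
      have e3 : (∑ x ∈ (Finset.univ.erase i).erase j, (b'' x) ^ 2) =
          ∑ x ∈ (Finset.univ.erase i).erase j, (b x) ^ 2 :=
        Finset.sum_congr rfl hrestsq
      rw [e1, e2, e3, hii, hjj]
      have hbj := hb j
      have hx1 : 1 ≤ b i := hb i
      obtain ⟨x', hx'⟩ : ∃ x', b i = x' + 1 := ⟨b i - 1, by omega⟩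
      rw [hx']
      simp only [Nat.add_sub_cancel]
      have hle : b j + 1 ≤ x' := by omega
      nlinarith
    exact absurd (hmin b'' h1 h2) (by omega)
  -- step 2: conclude
  obtain ⟨j0, -, hj0⟩ := Finset.exists_min_image Finset.univ b ⟨⟨0, hk0⟩, Finset.mem_univ _⟩
  set m := b j0 with hm
  have hub : ∀ x, b x = m ∨ b x = m + 1 := by
    intro x
    have h1 := hj0 x (Finset.mem_univ x)
    have h2 := hstep x j0
    omega
  have hqe : q = k * m + ∑ x, (if b x = m + 1 then 1 else 0) := by
    rw [← hsum]
    have : ∀ x : Fin k, b x = m + (if b x = m + 1 then 1 else 0) := by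
      intro x
      rcases hub x with h | h <;> rw [h] <;> split_ifs <;> omega
    calc (∑ x, b x) = ∑ x : Fin k, (m + (if b x = m + 1 then 1 else 0)) :=
          Finset.sum_congr rfl fun x _ => this x
      _ = k * m + ∑ x, (if b x = m + 1 then 1 else 0) := by
          rw [Finset.sum_add_distrib, Finset.sum_const, Finset.card_univ, Fintype.card_fin,
            smul_eq_mul]
    -- done
  have htlt : (∑ x, (if b x = m + 1 then 1 else 0)) < k := by
    have hsub : Finset.univ.filter (fun x => b x = m + 1) ⊆ Finset.univ.erase j0 := by
      intro x hx
      rw [Finset.mem_filter] at hx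
      refine Finset.mem_erase.2 ⟨?_, Finset.mem_univ _⟩
      intro h
      rw [h] at hx
      omega
    calc (∑ x, (if b x = m + 1 then 1 else 0))
        = (Finset.univ.filter (fun x => b x = m + 1)).card := by
          rw [← Finset.card_filter]
      _ ≤ (Finset.univ.erase j0).card := Finset.card_le_card hsub
      _ < k := by
          rw [Finset.card_erase_of_mem (Finset.mem_univ _), Finset.card_univ,
            Fintype.card_fin]
          omega
  have hdiv : q / k = m := by
    rw [hqe, Nat.mul_add_div hk0, Nat.div_eq_of_lt htlt]
    omega
  intro i
  rw [hdiv]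
  exact hub i


set_option maxHeartbeats 1000000

/-- For the ring of cliques `R(q,c)` with `q ≥ 2`, `c ≥ 2` and `2 ≤ k ≤ q`: among all
partitions of the vertex set into `k` parts each consisting of cyclically consecutive
cliques, the modularity is maximized exactly by those partitions whose block sizes are as
equal as possible (every block consists of `⌊q/k⌋` or `⌈q/k⌉ = ⌊q/k⌋ + 1` cliques);
equivalently, modularity is maximized precisely when `b 1² + ⋯ + b k²` is minimized over
compositions `b 1 + ⋯ + b k = q`. -/
theorem ringOfCliques_balanced_blocks (q c k : ℕ) (hq : 2 ≤ q) (hc : 2 ≤ c)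
    (hk : 2 ≤ k) (hkq : k ≤ q)
    (r : ℕ) (b : Fin k → ℕ) (hb : ∀ i, 1 ≤ b i) (hsum : (∑ i, b i) = q)
    (P : Finpartition (Finset.univ : Finset (Fin q × Fin c)))
    (hP : P.parts = blockParts q c (by omega) r b) :
    ((∀ (r' : ℕ) (b' : Fin k → ℕ), (∀ i, 1 ≤ b' i) → (∑ i, b' i) = q →
        ∀ P' : Finpartition (Finset.univ : Finset (Fin q × Fin c)),
          P'.parts = blockParts q c (by omega) r' b' →
          Qmod (ringOfCliques q c) P' ≤ Qmod (ringOfCliques q c) P) ↔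
      (∀ i, b i = q / k ∨ b i = q / k + 1)) ∧
    ((∀ (r' : ℕ) (b' : Fin k → ℕ), (∀ i, 1 ≤ b' i) → (∑ i, b' i) = q →
        ∀ P' : Finpartition (Finset.univ : Finset (Fin q × Fin c)),
          P'.parts = blockParts q c (by omega) r' b' →
          Qmod (ringOfCliques q c) P' ≤ Qmod (ringOfCliques q c) P) ↔
      (∀ b' : Fin k → ℕ, (∀ i, 1 ≤ b' i) → (∑ i, b' i) = q →
        (∑ i, (b i) ^ 2) ≤ ∑ i, (b' i) ^ 2)) := by
  have hq0 : 0 < q := by omega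
  have hc0 : 0 < c := by omega
  have hk0 : 0 < k := by omega
  have hmpos : (0 : ℝ) < (edgeCount (ringOfCliques q c) : ℝ) := by
    exact_mod_cast edgeCount_pos hq hc
  have hs1 : (1 : ℕ) ≤ c * (c - 1) + if q = 2 then 1 else 2 := by
    have h1 : 1 ≤ (if q = 2 then 1 else 2) := by split_ifs <;> omega
    calc (1 : ℕ) ≤ (if q = 2 then 1 else 2) := h1
      _ ≤ c * (c - 1) + (if q = 2 then 1 else 2) := Nat.le_add_left _ _
  have hspos : (0 : ℝ) < ((c * (c - 1) + if q = 2 then 1 else 2 : ℕ) : ℝ) := by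
    have : (1 : ℝ) ≤ ((c * (c - 1) + if q = 2 then 1 else 2 : ℕ) : ℝ) := by
      exact_mod_cast hs1
    linarith
  have hMaxMin :
      (∀ (r' : ℕ) (b' : Fin k → ℕ), (∀ i, 1 ≤ b' i) → (∑ i, b' i) = q →
        ∀ P' : Finpartition (Finset.univ : Finset (Fin q × Fin c)),
          P'.parts = blockParts q c (by omega : 0 < q) r' b' →
          Qmod (ringOfCliques q c) P' ≤ Qmod (ringOfCliques q c) P) ↔
      (∀ b' : Fin k → ℕ, (∀ i, 1 ≤ b' i) → (∑ i, b' i) = q →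
        (∑ i, (b i) ^ 2) ≤ ∑ i, (b' i) ^ 2) := by
    constructor
    · intro hmax b' hb' hsum'
      have hmaxP := hmax 0 b' hb' hsum' (blockFinpartition hq0 hc0 hb' hsum' 0) rfl
      rw [Qmod_formula hq hc hk r b hb hsum P hP,
        Qmod_formula hq hc hk 0 b' hb' hsum' (blockFinpartition hq0 hc0 hb' hsum' 0) rfl]
        at hmaxP
      have h2m : (0 : ℝ) < 1 / (2 * (edgeCount (ringOfCliques q c) : ℝ)) := by positivity
      have h1 := (mul_le_mul_iff_right₀ h2m).1 hmaxP
      have h2 : ((c * (c - 1) + if q = 2 then 1 else 2 : ℕ) : ℝ) ^ 2 *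
            (∑ i, (b i : ℝ) ^ 2) / (2 * (edgeCount (ringOfCliques q c) : ℝ)) ≤
          ((c * (c - 1) + if q = 2 then 1 else 2 : ℕ) : ℝ) ^ 2 *
            (∑ i, (b' i : ℝ) ^ 2) / (2 * (edgeCount (ringOfCliques q c) : ℝ)) := by
        linarith
      have h4 := (div_le_div_iff_of_pos_right
        (by positivity : (0 : ℝ) < 2 * (edgeCount (ringOfCliques q c) : ℝ))).1 h2
      have h5 := (mul_le_mul_iff_right₀ (pow_pos hspos 2)).1 h4
      have h6 : ((∑ i, (b i) ^ 2 : ℕ) : ℝ) ≤ ((∑ i, (b' i) ^ 2 : ℕ) : ℝ) := by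
        push_cast
        exact h5
      exact_mod_cast h6
    · intro hmin r' b' hb' hsum' P' hP'
      rw [Qmod_formula hq hc hk r b hb hsum P hP,
        Qmod_formula hq hc hk r' b' hb' hsum' P' hP']
      have hle : (∑ i, ((b i : ℝ)) ^ 2) ≤ ∑ i, ((b' i : ℝ)) ^ 2 := by
        have h := (Nat.cast_le (α := ℝ)).2 (hmin b' hb' hsum')
        push_cast at h
        exact h
      have h2m : (0 : ℝ) ≤ 1 / (2 * (edgeCount (ringOfCliques q c) : ℝ)) := by positivity
      apply mul_le_mul_of_nonneg_left _ h2m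
      apply sub_le_sub_left
      have hnum : ((c * (c - 1) + if q = 2 then 1 else 2 : ℕ) : ℝ) ^ 2 *
            (∑ i, (b i : ℝ) ^ 2) ≤
          ((c * (c - 1) + if q = 2 then 1 else 2 : ℕ) : ℝ) ^ 2 *
            (∑ i, (b' i : ℝ) ^ 2) :=
        mul_le_mul_of_nonneg_left hle (by positivity)
      apply (div_le_div_iff_of_pos_right
        (by positivity : (0 : ℝ) < 2 * (edgeCount (ringOfCliques q c) : ℝ))).2 hnum
  refine ⟨hMaxMin.trans ?_, hMaxMin⟩
  constructor
  · intro hmin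
    exact min_balanced hk hb hsum hmin
  · intro hbal b' hb' hsum'
    exact balanced_min hk0 hbal hsum hsum'


end HCSPaper
end
end
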